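/- arXiv:1003.0244 — 6 statements merged into one kernel-verified Lean document; each statement's English description precedes it below -/
import Mathlib

section
/- The dimension of the direction set is not a topological invariant: there exists a semialgebraic homeomorphism h : ℝ³ → ℝ³, h(x,y,z) = (x,y,z³), and an algebraic set V = {(x,y,z) : x² + y² − z⁶ = 0} such that dim D(V) = 0 while dim D(h(V)) = 1, where D(A) is the direction set of A at the origin. -/
open Set Filter Topology Metric MeasureTheory
open scoped NNReal ENNReal

noncomputable section

abbrev E (n : ℕ) : Type := EuclideanSpace ℝ (Fin n)

def toE (n : ℕ) (f : Fin n → ℝ) : E n := WithLp.toLp 2 f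

/-- An o-minimal structure on ℝ (Definition 2.4). -/
structure OMinStructure : Type where
  defin : ∀ n : ℕ, Set (Set (E n))
  union_mem : ∀ {n : ℕ} {A B : Set (E n)}, A ∈ defin n → B ∈ defin n → A ∪ B ∈ defin n
  compl_mem : ∀ {n : ℕ} {A : Set (E n)}, A ∈ defin n → Aᶜ ∈ defin n
  prod_left_mem : ∀ {n : ℕ} {A : Set (E n)}, A ∈ defin n →
    {x : E (n + 1) | toE n (fun i : Fin n => x i.castSucc) ∈ A} ∈ defin (n + 1)
  prod_right_mem : ∀ {n : ℕ} {A : Set (E n)}, A ∈ defin n →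
    {x : E (n + 1) | toE n (fun i : Fin n => x i.succ) ∈ A} ∈ defin (n + 1)
  proj_mem : ∀ {n : ℕ} {A : Set (E (n + 1))}, A ∈ defin (n + 1) →
    {x : E n | ∃ t : ℝ, toE (n + 1) (Fin.snoc (fun j => x j) t) ∈ A} ∈ defin n
  poly_mem : ∀ {n : ℕ} (P : MvPolynomial (Fin n) ℝ),
    {x : E n | MvPolynomial.eval (fun i => x i) P = 0} ∈ defin n
  o_minimal : ∀ {A : Set (E 1)}, A ∈ defin 1 →
    ∃ F : Finset (Set ℝ), (∀ I ∈ F, (∃ a, I = {a}) ∨ (∃ a b, I = Ioo a b) ∨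
      (∃ a, I = Iio a) ∨ (∃ a, I = Ioi a) ∨ I = univ) ∧
      {t : ℝ | toE 1 (fun _ : Fin 1 => t) ∈ A} = ⋃₀ ↑F

/-- Direction set of `A` at `0`. -/
def dirSet {n : ℕ} (A : Set (E n)) : Set (E n) :=
  {a : E n | ‖a‖ = 1 ∧ ∃ x : ℕ → E n, (∀ i, x i ∈ A) ∧ (∀ i, x i ≠ 0) ∧
    Tendsto x atTop (𝓝 0) ∧ Tendsto (fun i => (‖x i‖)⁻¹ • x i) atTop (𝓝 a)}

/-- Real tangent cone `LD(A)`: the half-cone over the direction set. -/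
def LD {n : ℕ} (A : Set (E n)) : Set (E n) :=
  {y : E n | ∃ t : ℝ, 0 ≤ t ∧ ∃ a ∈ dirSet A, y = t • a}

/-- `Φ`: odd, strictly increasing, continuous definable germs `(ℝ,0) → (ℝ,0)`. -/
def IsPhi (S : OMinStructure) (θ : ℝ → ℝ) : Prop :=
  θ 0 = 0 ∧ (∀ t, θ (-t) = - θ t) ∧
  (∃ δ > 0, StrictMonoOn θ (Ioo (-δ) δ) ∧ ContinuousOn θ (Ioo (-δ) δ)) ∧
  {x : E 2 | x 1 = θ (x 0)} ∈ S.defin 2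

/-- Sea-tangle neighbourhood of `A` with respect to `θ`. -/
def STN {n : ℕ} (θ : ℝ → ℝ) (A : Set (E n)) : Set (E n) :=
  {x : E n | infDist x A ≤ θ ‖x‖ * ‖x‖}

/-- `A ⊆ B` as germs at `0`. -/
def GermSub {n : ℕ} (A B : Set (E n)) : Prop :=
  ∃ ε > 0, ∀ x ∈ A, ‖x‖ < ε → x ∈ B

/-- STN-equivalence of set-germs at `0`. -/
def STEquiv (S : OMinStructure) {n : ℕ} (A B : Set (E n)) : Prop :=
  (∃ θ, IsPhi S θ ∧ GermSub B (STN θ A)) ∧ (∃ θ, IsPhi S θ ∧ GermSub A (STN θ B))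

/-- `h` is a bi-Lipschitz homeomorphism germ `(ℝⁿ,0) → (ℝⁿ,0)` with constants `K₁ ≤ K₂`. -/
def BiLipWith {n : ℕ} (K₁ K₂ : ℝ) (h : E n → E n) : Prop :=
  h 0 = 0 ∧ ∃ δ > 0,
    (∀ x ∈ ball (0 : E n) δ, ∀ y ∈ ball (0 : E n) δ,
      K₁ * ‖x - y‖ ≤ ‖h x - h y‖ ∧ ‖h x - h y‖ ≤ K₂ * ‖x - y‖) ∧
    ∃ ε > 0, ball (0 : E n) ε ⊆ h '' ball (0 : E n) δ

/-- Bi-Lipschitz homeomorphism germ `(ℝⁿ,0) → (ℝⁿ,0)`. -/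
def BiLipGerm {n : ℕ} (h : E n → E n) : Prop :=
  ∃ K₁ K₂ : ℝ, 0 < K₁ ∧ K₁ ≤ K₂ ∧ BiLipWith K₁ K₂ h

/-- Sequence selection property. -/
def SSP {n : ℕ} (A : Set (E n)) : Prop :=
  ∀ a : ℕ → E n, (∀ m, a m ≠ 0) → Tendsto a atTop (𝓝 0) →
    (∃ v ∈ dirSet A, Tendsto (fun m => (‖a m‖)⁻¹ • a m) atTop (𝓝 v)) →
    ∃ b : ℕ → E n, (∀ m, b m ∈ A) ∧
      Tendsto (fun m => ‖a m - b m‖ / ‖a m‖) atTop (𝓝 0)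

/-- Weak sequence selection property. -/
def WSSP {n : ℕ} (A : Set (E n)) : Prop :=
  ∀ a : ℕ → E n, (∀ m, a m ≠ 0) → Tendsto a atTop (𝓝 0) →
    (∃ v ∈ dirSet A, Tendsto (fun m => (‖a m‖)⁻¹ • a m) atTop (𝓝 v)) →
    ∃ φ : ℕ → ℕ, StrictMono φ ∧ ∃ b : ℕ → E n, (∀ j, b j ∈ A) ∧
      Tendsto (fun j => ‖a (φ j) - b j‖ / ‖a (φ j)‖) atTop (𝓝 0)

/-- Graph of a self-map of `ℝⁿ`, as a subset of `ℝ^{n+n}`. -/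
def graphSet {n : ℕ} (h : E n → E n) : Set (E (n + n)) :=
  {z : E (n + n) | h (toE n (fun i => z (Fin.castAdd n i))) = toE n (fun i => z (Fin.natAdd n i))}


/-! ### Auxiliary material for Example 1.2 -/

section Aux

lemma cube_strictMono : StrictMono (fun t : ℝ => t ^ 3) :=
  Odd.strictMono_pow ⟨1, by norm_num⟩

lemma cube_surjective : Function.Surjective (fun t : ℝ => t ^ 3) := by
  intro w
  rcases le_or_gt 0 w with hw | hw
  · refine ⟨w ^ ((1:ℝ)/3), ?_⟩
    have : (w ^ ((1:ℝ)/3)) ^ (3:ℕ) = w ^ (((1:ℝ)/3) * 3) := by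
      rw [← Real.rpow_natCast (w ^ ((1:ℝ)/3)) 3, ← Real.rpow_mul hw]
      norm_num
    simpa using this.trans (by norm_num)
  · refine ⟨-((-w) ^ ((1:ℝ)/3)), ?_⟩
    have hw' : (0:ℝ) ≤ -w := by linarith
    have : ((-w) ^ ((1:ℝ)/3)) ^ (3:ℕ) = (-w) ^ (((1:ℝ)/3) * 3) := by
      rw [← Real.rpow_natCast ((-w) ^ ((1:ℝ)/3)) 3, ← Real.rpow_mul hw']
      norm_num
    show (-(-w) ^ ((1:ℝ)/3)) ^ (3:ℕ) = w
    rw [Odd.neg_pow (⟨1, by norm_num⟩ : Odd 3), this]; norm_num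

def cubeHomeo : ℝ ≃ₜ ℝ :=
  (StrictMono.orderIsoOfSurjective _ cube_strictMono cube_surjective).toHomeomorph

def cubeMap : E 3 ≃ₜ E 3 :=
  ((EuclideanSpace.equiv (Fin 3) ℝ).toHomeomorph.trans
    (Homeomorph.piCongrRight fun i => if i = 2 then cubeHomeo else Homeomorph.refl ℝ)).trans
    (EuclideanSpace.equiv (Fin 3) ℝ).toHomeomorph.symm

lemma cubeMap_apply (x : E 3) :
    cubeMap x = toE 3 (fun i => if i = 2 then (x 2) ^ 3 else x i) := by
  ext i
  show (if i = 2 then cubeHomeo else Homeomorph.refl ℝ) (x i) = _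
  by_cases h : i = 2
  · subst h; simp [toE, cubeHomeo]
  · simp [toE, h]

lemma normsq3 (a : E 3) : ‖a‖ ^ 2 = (a 0) ^ 2 + (a 1) ^ 2 + (a 2) ^ 2 := by
  rw [EuclideanSpace.norm_eq, Real.sq_sqrt (by positivity)]
  simp [Fin.sum_univ_three, sq_abs]

lemma abs_coord_le (a : E 3) (i : Fin 3) : |a i| ≤ ‖a‖ := by
  rw [EuclideanSpace.norm_eq, ← Real.sqrt_sq_eq_abs]
  apply Real.sqrt_le_sqrt
  rw [← sq_abs]
  exact Finset.single_le_sum (f := fun j => ‖a j‖ ^ 2) (fun j _ => by positivity)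
    (Finset.mem_univ i)

lemma smul_coord (c : ℝ) (a : E 3) (i : Fin 3) : (c • a) i = c * a i := rfl

lemma tendsto_coord {u : ℕ → E 3} {a : E 3} (h : Tendsto u atTop (𝓝 a)) (i : Fin 3) :
    Tendsto (fun n => u n i) atTop (𝓝 (a i)) :=
  ((EuclideanSpace.proj (𝕜 := ℝ) i).continuous.tendsto a).comp h

def Ccone : Set (E 3) := {x : E 3 | (x 0) ^ 2 + (x 1) ^ 2 - (x 2) ^ 2 = 0}

lemma Ccone_closed : IsClosed Ccone := by
  have hc : ∀ i : Fin 3, Continuous fun x : E 3 => x i :=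
    fun i => (EuclideanSpace.proj (𝕜 := ℝ) i).continuous
  exact isClosed_eq ((((hc 0).pow 2).add ((hc 1).pow 2)).sub ((hc 2).pow 2)) continuous_const

lemma Ccone_smul {x : E 3} (hx : x ∈ Ccone) (c : ℝ) : c • x ∈ Ccone := by
  simp only [Ccone, mem_setOf_eq, smul_coord] at *
  have : (c * x 0) ^ 2 + (c * x 1) ^ 2 - (c * x 2) ^ 2
      = c ^ 2 * ((x 0) ^ 2 + (x 1) ^ 2 - (x 2) ^ 2) := by ring
  rw [this, hx, mul_zero]

lemma dirSet_Ccone : dirSet Ccone = {a : E 3 | ‖a‖ = 1 ∧ a ∈ Ccone} := by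
  ext a; constructor
  · rintro ⟨ha1, x, hxC, hx0, -, hlim⟩
    refine ⟨ha1, ?_⟩
    exact Ccone_closed.mem_of_tendsto hlim
      (Eventually.of_forall fun n => Ccone_smul (hxC n) _)
  · rintro ⟨ha1, haC⟩
    have ha0 : a ≠ 0 := fun h => by simp [h] at ha1
    refine ⟨ha1, fun n => ((n : ℝ) + 1)⁻¹ • a, fun n => Ccone_smul haC _, ?_, ?_, ?_⟩
    · intro n
      exact smul_ne_zero (by positivity) ha0
    · have := (tendsto_one_div_add_atTop_nhds_zero_nat (𝕜 := ℝ)).smul_const a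
      simpa [one_div] using this
    · have heq : ∀ n : ℕ, (‖((n : ℝ) + 1)⁻¹ • a‖)⁻¹ • (((n : ℝ) + 1)⁻¹ • a) = a := by
        intro n
        have hpos : (0:ℝ) < ((n : ℝ) + 1)⁻¹ := by positivity
        rw [norm_smul, ha1, Real.norm_eq_abs, abs_of_pos hpos, mul_one, smul_smul,
          inv_inv, mul_inv_cancel₀ (by positivity), one_smul]
      simpa [heq] using (tendsto_const_nhds : Tendsto (fun _ : ℕ => a) atTop (𝓝 a))

def Vset : Set (E 3) := {x : E 3 | (x 0) ^ 2 + (x 1) ^ 2 - (x 2) ^ 6 = 0}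

lemma dirSet_Vset_sub : dirSet Vset ⊆ {a : E 3 | a 0 = 0 ∧ a 1 = 0 ∧ ‖a‖ = 1} := by
  rintro a ⟨ha1, x, hxV, hx0, hlim0, hlim⟩
  have hnpos : ∀ n, 0 < ‖x n‖ := fun n => norm_pos_iff.2 (hx0 n)
  have key : ∀ n, ((‖x n‖⁻¹ • x n) 0) ^ 2 + ((‖x n‖⁻¹ • x n) 1) ^ 2 ≤ ‖x n‖ ^ 4 := by
    intro n
    have hVn : (x n 0) ^ 2 + (x n 1) ^ 2 = (x n 2) ^ 6 := by
      have := hxV n; simpa [Vset, sub_eq_zero] using this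
    have habs : |x n 2| ≤ ‖x n‖ := abs_coord_le _ _
    have h2 : (x n 2) ^ 6 ≤ ‖x n‖ ^ 6 := by
      calc (x n 2) ^ 6 = |x n 2| ^ 6 := by
            rw [← abs_pow, abs_of_nonneg (by positivity)]
        _ ≤ ‖x n‖ ^ 6 := pow_le_pow_left₀ (abs_nonneg _) habs 6
    have hne := (hnpos n).ne'
    calc ((‖x n‖⁻¹ • x n) 0) ^ 2 + ((‖x n‖⁻¹ • x n) 1) ^ 2
        = ‖x n‖⁻¹ ^ 2 * ((x n 0) ^ 2 + (x n 1) ^ 2) := by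
          simp only [smul_coord]; ring
      _ = ‖x n‖⁻¹ ^ 2 * (x n 2) ^ 6 := by rw [hVn]
      _ ≤ ‖x n‖⁻¹ ^ 2 * ‖x n‖ ^ 6 := mul_le_mul_of_nonneg_left h2 (by positivity)
      _ = ‖x n‖ ^ 4 := by field_simp
  have hsq : Tendsto (fun n => ((‖x n‖⁻¹ • x n) 0) ^ 2 + ((‖x n‖⁻¹ • x n) 1) ^ 2)
      atTop (𝓝 ((a 0) ^ 2 + (a 1) ^ 2)) :=
    ((tendsto_coord hlim 0).pow 2).add ((tendsto_coord hlim 1).pow 2)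
  have hup : Tendsto (fun n => ‖x n‖ ^ 4) atTop (𝓝 0) := by
    have := (hlim0.norm).pow 4
    simpa using this
  have hz : Tendsto (fun n => ((‖x n‖⁻¹ • x n) 0) ^ 2 + ((‖x n‖⁻¹ • x n) 1) ^ 2)
      atTop (𝓝 0) :=
    squeeze_zero (fun n => by positivity) key hup
  have h00 : (a 0) ^ 2 + (a 1) ^ 2 = 0 := tendsto_nhds_unique hsq hz
  have h0 : a 0 = 0 := by nlinarith [sq_nonneg (a 0), sq_nonneg (a 1)]
  have h1 : a 1 = 0 := by nlinarith [sq_nonneg (a 0), sq_nonneg (a 1)]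
  exact ⟨h0, h1, ha1⟩

lemma abs_cos_sub (t t' : ℝ) : |Real.cos t - Real.cos t'| ≤ |t - t'| := by
  rw [Real.cos_sub_cos]
  have h1 : |Real.sin ((t + t') / 2)| ≤ 1 := Real.abs_sin_le_one _
  have h2 : |Real.sin ((t - t') / 2)| ≤ |(t - t') / 2| := Real.abs_sin_le_abs
  rw [abs_mul, abs_mul]
  have : |(t - t') / 2| = |t - t'| / 2 := by rw [abs_div]; norm_num
  rw [this] at h2
  have hn : |(-2 : ℝ)| = 2 := by norm_num
  rw [hn]
  nlinarith [abs_nonneg (Real.sin ((t - t') / 2)), abs_nonneg (Real.sin ((t + t') / 2)),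
    abs_nonneg (t - t')]

lemma abs_sin_sub (t t' : ℝ) : |Real.sin t - Real.sin t'| ≤ |t - t'| := by
  rw [Real.sin_sub_sin]
  have h1 : |Real.cos ((t + t') / 2)| ≤ 1 := Real.abs_cos_le_one _
  have h2 : |Real.sin ((t - t') / 2)| ≤ |(t - t') / 2| := Real.abs_sin_le_abs
  rw [abs_mul, abs_mul]
  have : |(t - t') / 2| = |t - t'| / 2 := by rw [abs_div]; norm_num
  rw [this] at h2
  have hn : |(2 : ℝ)| = 2 := by norm_num
  rw [hn]
  nlinarith [abs_nonneg (Real.sin ((t - t') / 2)), abs_nonneg (Real.cos ((t + t') / 2)),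
    abs_nonneg (t - t')]

def rc : ℝ := (Real.sqrt 2)⁻¹

lemma rc_pos : 0 < rc := by
  rw [rc]; positivity

lemma rc_sq : rc ^ 2 = 1 / 2 := by
  rw [rc, inv_pow, Real.sq_sqrt (by norm_num : (0:ℝ) ≤ 2)]; norm_num

def circ (s t : ℝ) : E 3 := toE 3 ![rc * Real.cos t, rc * Real.sin t, s]

lemma circ_apply0 (s t : ℝ) : circ s t 0 = rc * Real.cos t := rfl
lemma circ_apply1 (s t : ℝ) : circ s t 1 = rc * Real.sin t := rfl
lemma circ_apply2 (s t : ℝ) : circ s t 2 = s := rfl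

lemma circ_lipschitz (s : ℝ) : LipschitzWith 1 (circ s) := by
  apply LipschitzWith.of_dist_le_mul
  intro t t'
  rw [NNReal.coe_one, one_mul, EuclideanSpace.dist_eq, Real.dist_eq, ← Real.sqrt_sq_eq_abs]
  apply Real.sqrt_le_sqrt
  rw [Fin.sum_univ_three, circ_apply0, circ_apply0, circ_apply1, circ_apply1,
    circ_apply2, circ_apply2]
  have hc := abs_cos_sub t t'
  have hs := abs_sin_sub t t'
  have e1 : dist (rc * Real.cos t) (rc * Real.cos t') ^ 2
      = rc ^ 2 * (Real.cos t - Real.cos t') ^ 2 := by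
    rw [Real.dist_eq, sq_abs]; ring
  have e2 : dist (rc * Real.sin t) (rc * Real.sin t') ^ 2
      = rc ^ 2 * (Real.sin t - Real.sin t') ^ 2 := by
    rw [Real.dist_eq, sq_abs]; ring
  rw [e1, e2, rc_sq]
  have hc2 : (Real.cos t - Real.cos t') ^ 2 ≤ (t - t') ^ 2 := by
    rw [← sq_abs, ← sq_abs (t - t')]
    exact pow_le_pow_left₀ (abs_nonneg _) hc 2
  have hs2 : (Real.sin t - Real.sin t') ^ 2 ≤ (t - t') ^ 2 := by
    rw [← sq_abs, ← sq_abs (t - t')]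
    exact pow_le_pow_left₀ (abs_nonneg _) hs 2
  have : dist s s = 0 := dist_self s
  rw [this]
  nlinarith

lemma exists_angle {u v : ℝ} (h : u ^ 2 + v ^ 2 = 1) :
    ∃ t : ℝ, Real.cos t = u ∧ Real.sin t = v := by
  have hu1 : -1 ≤ u := by nlinarith
  have hu2 : u ≤ 1 := by nlinarith
  rcases le_or_gt 0 v with hv | hv
  · refine ⟨Real.arccos u, Real.cos_arccos hu1 hu2, ?_⟩
    rw [Real.sin_arccos]
    have : 1 - u ^ 2 = v ^ 2 := by linarith
    rw [this, Real.sqrt_sq hv]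
  · refine ⟨-Real.arccos u, ?_, ?_⟩
    · rw [Real.cos_neg]; exact Real.cos_arccos hu1 hu2
    · rw [Real.sin_neg, Real.sin_arccos]
      have : 1 - u ^ 2 = v ^ 2 := by linarith
      rw [this, Real.sqrt_sq_eq_abs, abs_of_neg hv, neg_neg]

lemma circle_cover :
    {a : E 3 | ‖a‖ = 1 ∧ a ∈ Ccone} ⊆ circ rc '' univ ∪ circ (-rc) '' univ := by
  rintro a ⟨ha1, haC⟩
  have hn := normsq3 a
  rw [ha1, one_pow] at hn
  have hC : (a 0) ^ 2 + (a 1) ^ 2 - (a 2) ^ 2 = 0 := haC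
  have hrc := rc_sq
  have h2 : (a 2) ^ 2 = 1 / 2 := by nlinarith
  have h01 : (a 0) ^ 2 + (a 1) ^ 2 = 1 / 2 := by nlinarith
  have hrne : rc ≠ 0 := rc_pos.ne'
  have hone : (a 0 / rc) ^ 2 + (a 1 / rc) ^ 2 = 1 := by
    field_simp
    linarith
  obtain ⟨t, hct, hst⟩ := exists_angle hone
  have ha0 : a 0 = rc * Real.cos t := by rw [hct]; field_simp
  have ha1' : a 1 = rc * Real.sin t := by rw [hst]; field_simp
  have ha2 : a 2 = rc ∨ a 2 = -rc := by
    have hfac : (a 2 - rc) * (a 2 + rc) = 0 := by linear_combination h2 - hrc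
    rcases mul_eq_zero.1 hfac with h | h
    · left; linarith
    · right; linarith
  rcases ha2 with h | h
  · left
    refine ⟨t, mem_univ t, ?_⟩
    ext i; fin_cases i
    · exact (circ_apply0 rc t).trans ha0.symm
    · exact (circ_apply1 rc t).trans ha1'.symm
    · exact (circ_apply2 rc t).trans h.symm
  · right
    refine ⟨t, mem_univ t, ?_⟩
    ext i; fin_cases i
    · exact (circ_apply0 (-rc) t).trans ha0.symm
    · exact (circ_apply1 (-rc) t).trans ha1'.symm
    · exact (circ_apply2 (-rc) t).trans h.symm

lemma dimH_dirSet_Ccone_le : dimH (dirSet Ccone) ≤ 1 := by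
  rw [dirSet_Ccone]
  refine le_trans (dimH_mono circle_cover) ?_
  rw [dimH_union]
  have h1 := (circ_lipschitz rc).dimH_image_le univ
  have h2 := (circ_lipschitz (-rc)).dimH_image_le univ
  rw [Real.dimH_univ] at h1 h2
  exact max_le h1 h2

lemma le_dimH_dirSet_Ccone : 1 ≤ dimH (dirSet Ccone) := by
  set f : E 3 → ℝ := fun a => a 0 with hf_def
  have hf : LipschitzWith 1 f := by
    apply LipschitzWith.of_dist_le_mul
    intro a b
    rw [NNReal.coe_one, one_mul, Real.dist_eq, dist_eq_norm]
    have hab : f a - f b = (a - b) 0 := rfl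
    rw [hab]
    exact abs_coord_le (a - b) 0
  have himg : Icc (0:ℝ) rc ⊆ f '' dirSet Ccone := by
    rintro t ⟨ht0, htc⟩
    set a : E 3 := toE 3 ![t, Real.sqrt (rc ^ 2 - t ^ 2), rc] with ha_def
    have hsq : 0 ≤ rc ^ 2 - t ^ 2 := by nlinarith
    have ha0 : a 0 = t := rfl
    have ha1 : a 1 = Real.sqrt (rc ^ 2 - t ^ 2) := rfl
    have ha2 : a 2 = rc := rfl
    have hC : a ∈ Ccone := by
      show (a 0) ^ 2 + (a 1) ^ 2 - (a 2) ^ 2 = 0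
      rw [ha0, ha1, ha2, Real.sq_sqrt hsq]; ring
    have hnorm : ‖a‖ = 1 := by
      have h2 : ‖a‖ ^ 2 = 1 := by
        rw [normsq3, ha0, ha1, ha2, Real.sq_sqrt hsq]
        nlinarith [rc_sq]
      have hfac : (‖a‖ - 1) * (‖a‖ + 1) = 0 := by linear_combination h2
      rcases mul_eq_zero.1 hfac with h | h
      · linarith
      · nlinarith [norm_nonneg a]
    rw [dirSet_Ccone]
    exact ⟨a, ⟨hnorm, hC⟩, ha0⟩
  calc (1 : ℝ≥0∞) = dimH (Icc (0:ℝ) rc) := by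
        rw [Real.dimH_of_mem_nhds (Icc_mem_nhds (by nlinarith [rc_pos] : (0:ℝ) < rc / 2)
          (by nlinarith [rc_pos] : rc / 2 < rc))]
        simp
    _ ≤ dimH (f '' dirSet Ccone) := dimH_mono himg
    _ ≤ dimH (dirSet Ccone) := hf.dimH_image_le _

lemma image_cubeMap_Vset : (cubeMap : E 3 → E 3) '' Vset = Ccone := by
  ext y
  constructor
  · rintro ⟨x, hx, rfl⟩
    have h0 : cubeMap x 0 = x 0 := by rw [cubeMap_apply]; simp [toE]
    have h1 : cubeMap x 1 = x 1 := by rw [cubeMap_apply]; simp [toE]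
    have h2 : cubeMap x 2 = (x 2) ^ 3 := by rw [cubeMap_apply]; simp [toE]
    show (cubeMap x 0) ^ 2 + (cubeMap x 1) ^ 2 - (cubeMap x 2) ^ 2 = 0
    rw [h0, h1, h2]
    have hxV : (x 0) ^ 2 + (x 1) ^ 2 - (x 2) ^ 6 = 0 := hx
    linear_combination hxV
  · intro hy
    refine ⟨cubeMap.symm y, ?_, cubeMap.apply_symm_apply y⟩
    set x := cubeMap.symm y with hx_def
    have hxy : cubeMap x = y := cubeMap.apply_symm_apply y
    have h0 : y 0 = x 0 := by rw [← hxy, cubeMap_apply]; simp [toE]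
    have h1 : y 1 = x 1 := by rw [← hxy, cubeMap_apply]; simp [toE]
    have h2 : y 2 = (x 2) ^ 3 := by rw [← hxy, cubeMap_apply]; simp [toE]
    show (x 0) ^ 2 + (x 1) ^ 2 - (x 2) ^ 6 = 0
    have hy' : (y 0) ^ 2 + (y 1) ^ 2 - (y 2) ^ 2 = 0 := hy
    rw [h0, h1, h2] at hy'
    linear_combination hy'

def ez (s : ℝ) : E 3 := toE 3 ![0, 0, s]

lemma dirSet_Vset_pair : dirSet Vset ⊆ {ez 1, ez (-1)} := by
  intro a ha
  obtain ⟨h0, h1, hn⟩ := dirSet_Vset_sub ha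
  have h2 : (a 2) ^ 2 = 1 := by
    have hns := normsq3 a
    rw [h0, h1, hn] at hns
    nlinarith
  have hfac : (a 2 - 1) * (a 2 + 1) = 0 := by linear_combination h2
  simp only [mem_insert_iff, mem_singleton_iff]
  rcases mul_eq_zero.1 hfac with h | h
  · left
    ext i; fin_cases i
    · exact h0
    · exact h1
    · show a 2 = 1; linarith
  · right
    ext i; fin_cases i
    · exact h0
    · exact h1
    · show a 2 = -1; linarith

end Aux

/-- Example 1.2: the dimension of the direction set is not a topological invariant. -/
theorem stmt0 :
    ∃ (h : Homeomorph (E 3) (E 3)) (V : Set (E 3)),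
      (∀ x : E 3, h x = toE 3 (fun i => if i = 2 then (x 2) ^ 3 else x i)) ∧
      V = {x : E 3 | (x 0) ^ 2 + (x 1) ^ 2 - (x 2) ^ 6 = 0} ∧
      (0 : E 3) ∈ closure V ∧
      dimH (dirSet V) = 0 ∧ dimH (dirSet (h '' V)) = 1 := by
  refine ⟨cubeMap, Vset, cubeMap_apply, rfl, ?_, ?_, ?_⟩
  · refine subset_closure ?_
    show ((0 : E 3) 0) ^ 2 + ((0 : E 3) 1) ^ 2 - ((0 : E 3) 2) ^ 6 = 0
    norm_num
  · refine le_antisymm ?_ zero_le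
    refine le_trans (dimH_mono dirSet_Vset_pair) ?_
    have hcnt : ({ez 1, ez (-1)} : Set (E 3)).Countable :=
      (Set.countable_singleton _).insert _
    exact hcnt.dimH_zero.le
  · rw [image_cubeMap_Vset]
    exact le_antisymm dimH_dirSet_Ccone_le le_dimH_dirSet_Ccone
end
end

section
/- For any set-germ A at 0 ∈ ℝⁿ with 0 ∈ closure(A) and any θ ∈ Φ, the direction sets satisfy D(ST_θ(A)) = D(A). -/
open Set Filter Topology Metric MeasureTheory
open scoped NNReal ENNReal

noncomputable section

lemma aux_mem_dirSet {n : ℕ} {A : Set (E n)} {a : E n} (ha : ‖a‖ = 1)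
    (x : ℕ → E n) (hx : ∀ᶠ i in atTop, x i ∈ A ∧ x i ≠ 0)
    (h0 : Tendsto x atTop (𝓝 0))
    (hdir : Tendsto (fun i => (‖x i‖)⁻¹ • x i) atTop (𝓝 a)) : a ∈ dirSet A := by
  obtain ⟨N, hN⟩ := eventually_atTop.mp hx
  exact ⟨ha, fun i => x (i + N), fun i => (hN _ (Nat.le_add_left _ _)).1,
    fun i => (hN _ (Nat.le_add_left _ _)).2,
    h0.comp (tendsto_add_atTop_nat N), hdir.comp (tendsto_add_atTop_nat N)⟩

/-- Corollary 4.10 (1): `D(ST_θ(A)) = D(A)` for any `θ ∈ Φ`. -/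
theorem stmt7 (S : OMinStructure) (n : ℕ) (A : Set (E n))
    (hA : (0 : E n) ∈ closure A) (θ : ℝ → ℝ) (hθ : IsPhi S θ) :
    dirSet (STN θ A) = dirSet A := by
  obtain ⟨hθ0, -, ⟨δ, hδ, hmono, hcont⟩, -⟩ := hθ
  ext a
  constructor
  · rintro ⟨ha, x, hxA, hx0, hxlim, hxdir⟩
    have hAne : A.Nonempty := closure_nonempty_iff.mp ⟨0, hA⟩
    have hnorm : Tendsto (fun i => ‖x i‖) atTop (𝓝 0) := by simpa using hxlim.norm
    have θcont : ContinuousAt θ 0 :=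
      hcont.continuousAt (Ioo_mem_nhds (by linarith) hδ)
    have hθn : Tendsto (fun i => θ ‖x i‖) atTop (𝓝 0) := by
      have h := θcont.tendsto.comp hnorm
      rwa [hθ0] at h
    have hsel : ∀ i, ∃ b ∈ A, dist (x i) b < ‖x i‖ * (θ ‖x i‖ + 1 / (i + 1)) := by
      intro i
      rw [← Metric.infDist_lt_iff hAne]
      have h1 : infDist (x i) A ≤ θ ‖x i‖ * ‖x i‖ := hxA i
      have h2 : 0 < ‖x i‖ := norm_pos_iff.mpr (hx0 i)
      have h3 : 0 < 1 / ((i : ℝ) + 1) := by positivity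
      nlinarith
    choose b hbA hbd using hsel
    set r : ℕ → ℝ := fun i => θ ‖x i‖ + 1 / (i + 1) with hr
    have hrlim : Tendsto r atTop (𝓝 0) := by
      have h := hθn.add tendsto_one_div_add_atTop_nhds_zero_nat
      rw [add_zero] at h
      exact h
    set e : ℕ → E n := fun i => (‖x i‖)⁻¹ • (b i - x i) with he
    have hebound : ∀ i, ‖e i‖ ≤ r i := by
      intro i
      have h2 : 0 < ‖x i‖ := norm_pos_iff.mpr (hx0 i)
      have hbx : ‖b i - x i‖ < ‖x i‖ * r i := by
        have h := hbd i
        rwa [dist_comm, dist_eq_norm] at h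
      have : ‖e i‖ = (‖x i‖)⁻¹ * ‖b i - x i‖ := by
        rw [he]; simp [norm_smul]
      rw [this, inv_mul_le_iff₀ h2]
      nlinarith
    have helim : Tendsto e atTop (𝓝 0) := squeeze_zero_norm hebound hrlim
    set c : ℕ → E n := fun i => (‖x i‖)⁻¹ • b i with hc
    have hceq : ∀ i, c i = (‖x i‖)⁻¹ • x i + e i := by
      intro i
      simp only [hc, he, smul_sub]
      abel
    have hclim : Tendsto c atTop (𝓝 a) := by
      have h := hxdir.add helim
      rw [add_zero] at h
      exact h.congr fun i => (hceq i).symm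
    have hane : ‖a‖ ≠ 0 := by rw [ha]; norm_num
    have hfc : ContinuousAt (fun y : E n => (‖y‖)⁻¹ • y) a :=
      ((continuous_norm.continuousAt).inv₀ hane).smul continuousAt_id
    have hdirc : Tendsto (fun i => (‖c i‖)⁻¹ • c i) atTop (𝓝 a) := by
      have h := hfc.tendsto.comp hclim
      rw [ha, inv_one, one_smul] at h
      exact h
    have hev : ∀ᶠ i in atTop, ‖e i‖ < 1 / 2 := by
      have h : Tendsto (fun i => ‖e i‖) atTop (𝓝 0) := by simpa using helim.norm
      exact h.eventually_lt_const (by norm_num)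
    have hbne : ∀ᶠ i in atTop, b i ≠ 0 := by
      filter_upwards [hev] with i hi hbz
      have hci : c i = 0 := by simp [hc, hbz]
      have hu : ‖(‖x i‖)⁻¹ • x i‖ = 1 := by
        rw [norm_smul, norm_inv, norm_norm,
          inv_mul_cancel₀ (norm_ne_zero_iff.mpr (hx0 i))]
      have h1 : (‖x i‖)⁻¹ • x i = c i - e i := by rw [hceq i]; abel
      rw [h1, hci, zero_sub, norm_neg] at hu
      linarith
    have hdirb : Tendsto (fun i => (‖b i‖)⁻¹ • b i) atTop (𝓝 a) := by
      refine hdirc.congr' ?_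
      filter_upwards [hbne] with i hbi
      have hx' : ‖x i‖ ≠ 0 := norm_ne_zero_iff.mpr (hx0 i)
      have hb' : ‖b i‖ ≠ 0 := norm_ne_zero_iff.mpr hbi
      have hcn : ‖c i‖ = (‖x i‖)⁻¹ * ‖b i‖ := by
        rw [hc]; simp [norm_smul]
      show (‖c i‖)⁻¹ • c i = (‖b i‖)⁻¹ • b i
      rw [hcn, hc, smul_smul]
      congr 1
      field_simp
    have hblim : Tendsto b atTop (𝓝 0) := by
      have h := hxlim.add (hnorm.smul helim)
      simp only [smul_zero, add_zero] at h
      refine h.congr fun i => ?_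
      have hx' : ‖x i‖ ≠ 0 := norm_ne_zero_iff.mpr (hx0 i)
      rw [he, smul_smul, mul_inv_cancel₀ hx', one_smul]
      abel
    refine aux_mem_dirSet ha b ?_ hblim hdirb
    filter_upwards [hbne] with i hi
    exact ⟨hbA i, hi⟩
  · rintro ⟨ha, x, hxA, hx0, hxlim, hxdir⟩
    have hnorm : Tendsto (fun i => ‖x i‖) atTop (𝓝 0) := by simpa using hxlim.norm
    have hev : ∀ᶠ i in atTop, ‖x i‖ < δ := hnorm.eventually_lt_const hδ
    refine aux_mem_dirSet ha x ?_ hxlim hxdir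
    filter_upwards [hev] with i hi
    refine ⟨?_, hx0 i⟩
    have h1 : 0 < ‖x i‖ := norm_pos_iff.mpr (hx0 i)
    have h2 : 0 < θ ‖x i‖ := by
      have h := hmono (show (0:ℝ) ∈ Ioo (-δ) δ from ⟨by linarith, hδ⟩)
        (show ‖x i‖ ∈ Ioo (-δ) δ from ⟨by linarith, hi⟩) h1
      rwa [hθ0] at h
    show infDist (x i) A ≤ θ ‖x i‖ * ‖x i‖
    rw [infDist_zero_of_mem (hxA i)]
    exact mul_nonneg h2.le h1.le
end
end

section
/- Let A be a set-germ at 0 ∈ ℝⁿ, definable in an o-minimal structure, with 0 ∈ closure(A), and let g : closure(A) \ {0} → ℝ be given by g(x) = dist(x, LD(A))/‖x‖. Then lim_{x→0, x ∈ closure(A)} g(x) = 0. -/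
open Set Filter Topology Metric MeasureTheory
open scoped NNReal ENNReal

noncomputable section

lemma unit_sub_unit_le {n : ℕ} (a b : EuclideanSpace ℝ (Fin n)) (ha : a ≠ 0) (hb : b ≠ 0) :
    ‖‖a‖⁻¹ • a - ‖b‖⁻¹ • b‖ ≤ 2 * ‖a - b‖ / ‖a‖ := by
  have ha' : (0:ℝ) < ‖a‖ := norm_pos_iff.2 ha
  have hb' : (0:ℝ) < ‖b‖ := norm_pos_iff.2 hb
  have key : ‖a‖⁻¹ • a - ‖b‖⁻¹ • b = ‖a‖⁻¹ • (a - b) + (‖a‖⁻¹ - ‖b‖⁻¹) • b := by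
    rw [smul_sub, sub_smul]; abel
  rw [key]
  have h1 : |‖a‖⁻¹ - ‖b‖⁻¹| ≤ ‖a - b‖ / (‖a‖ * ‖b‖) := by
    have : ‖a‖⁻¹ - ‖b‖⁻¹ = (‖b‖ - ‖a‖) / (‖a‖ * ‖b‖) := by field_simp
    rw [this, abs_div, abs_of_pos (show (0:ℝ) < ‖a‖ * ‖b‖ by positivity)]
    gcongr
    calc |‖b‖ - ‖a‖| ≤ ‖b - a‖ := abs_norm_sub_norm_le _ _
      _ = ‖a - b‖ := norm_sub_rev _ _
  calc ‖‖a‖⁻¹ • (a - b) + (‖a‖⁻¹ - ‖b‖⁻¹) • b‖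
      ≤ ‖‖a‖⁻¹ • (a - b)‖ + ‖(‖a‖⁻¹ - ‖b‖⁻¹) • b‖ := norm_add_le _ _
    _ = ‖a‖⁻¹ * ‖a - b‖ + |‖a‖⁻¹ - ‖b‖⁻¹| * ‖b‖ := by
        rw [norm_smul, norm_smul, norm_inv, norm_norm, Real.norm_eq_abs]
    _ ≤ ‖a‖⁻¹ * ‖a - b‖ + (‖a - b‖ / (‖a‖ * ‖b‖)) * ‖b‖ := by gcongr
    _ = 2 * ‖a - b‖ / ‖a‖ := by field_simp; ring

lemma key_seq {n : ℕ} (A : Set (E n)) (x : ℕ → E n)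
    (hmem : ∀ i, x i ∈ closure A) (hne : ∀ i, x i ≠ 0)
    (hlim : Tendsto x atTop (𝓝 0)) :
    Tendsto (fun i => infDist (x i) (LD A) / ‖x i‖) atTop (𝓝 0) := by
  apply tendsto_of_subseq_tendsto
  intro ns hns
  set z : ℕ → E n := fun i => x (ns i) with hzdef
  have hzlim : Tendsto z atTop (𝓝 0) := hlim.comp hns
  have hzne : ∀ i, z i ≠ 0 := fun i => hne (ns i)
  have hzmem : ∀ i, z i ∈ closure A := fun i => hmem (ns i)
  have hu : ∀ i, ‖z i‖⁻¹ • z i ∈ sphere (0 : E n) 1 := by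
    intro i
    rw [mem_sphere_zero_iff_norm]
    exact norm_smul_inv_norm (hzne i)
  obtain ⟨v, hv, ms, hms, hms_lim⟩ := (isCompact_sphere (0 : E n) 1).tendsto_subseq hu
  have hv1 : ‖v‖ = 1 := mem_sphere_zero_iff_norm.1 hv
  set w : ℕ → E n := fun j => z (ms j) with hwdef
  have hwne : ∀ j, w j ≠ 0 := fun j => hzne (ms j)
  have hwpos : ∀ j, (0:ℝ) < ‖w j‖ := fun j => norm_pos_iff.2 (hwne j)
  have hwlim : Tendsto w atTop (𝓝 0) := hzlim.comp hms.tendsto_atTop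
  have hulim : Tendsto (fun j => ‖w j‖⁻¹ • w j) atTop (𝓝 v) := hms_lim
  -- choose approximating points in A
  have hsel : ∀ j : ℕ, ∃ y ∈ A, dist (w j) y < ‖w j‖ / (2 * ((j:ℝ) + 1)) := by
    intro j
    exact Metric.mem_closure_iff.1 (hzmem (ms j)) _ (by have h := hwpos j; positivity)
  choose y hyA hyd using hsel
  have hwy : ∀ j, ‖w j - y j‖ < ‖w j‖ / (2 * ((j:ℝ) + 1)) := by
    intro j; rw [← dist_eq_norm]; exact hyd j
  have hfrac : ∀ j : ℕ, ‖w j‖ / (2 * ((j:ℝ) + 1)) ≤ ‖w j‖ / 2 := by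
    intro j
    apply div_le_div_of_nonneg_left (norm_nonneg _) two_pos
    nlinarith [Nat.cast_nonneg (α := ℝ) j]
  have hylb : ∀ j, ‖w j‖ / 2 ≤ ‖y j‖ := by
    intro j
    have h1 := norm_sub_norm_le (w j) (y j)
    have h2 := (hwy j).le.trans (hfrac j)
    linarith
  have hyne : ∀ j, y j ≠ 0 := by
    intro j
    have := lt_of_lt_of_le (by linarith [hwpos j] : (0:ℝ) < ‖w j‖ / 2) (hylb j)
    exact norm_pos_iff.1 this
  have hylim : Tendsto y atTop (𝓝 0) := by
    rw [tendsto_zero_iff_norm_tendsto_zero]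
    apply squeeze_zero (fun j => norm_nonneg _) (g := fun j => 2 * ‖w j‖)
    · intro j
      have h1 := norm_le_norm_add_norm_sub' (y j) (w j)
      have h2 := (hwy j).le.trans (hfrac j)
      have h3 : ‖w j - y j‖ = ‖y j - w j‖ := norm_sub_rev _ _
      have h4 : (0:ℝ) ≤ ‖w j‖ := norm_nonneg _
      linarith
    · have : Tendsto (fun j => ‖w j‖) atTop (𝓝 0) :=
        tendsto_zero_iff_norm_tendsto_zero.1 hwlim
      simpa using this.const_mul 2
  have hdiff : Tendsto (fun j => ‖y j‖⁻¹ • y j - ‖w j‖⁻¹ • w j) atTop (𝓝 0) := by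
    rw [tendsto_zero_iff_norm_tendsto_zero]
    apply squeeze_zero (fun j => norm_nonneg _) (g := fun j : ℕ => 2 * (1 / ((j:ℝ) + 1)))
    · intro j
      have h0 := unit_sub_unit_le (y j) (w j) (hyne j) (hwne j)
      have hylbpos : (0:ℝ) < ‖w j‖ / 2 := by linarith [hwpos j]
      have h1 : ‖y j - w j‖ = ‖w j - y j‖ := norm_sub_rev _ _
      have h2 : 2 * ‖y j - w j‖ / ‖y j‖ ≤ 2 * (‖w j‖ / (2 * ((j:ℝ) + 1))) / (‖w j‖ / 2) := by
        apply div_le_div₀ (by positivity) _ hylbpos (hylb j)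
        rw [h1]
        linarith [hwy j]
      have h3 : 2 * (‖w j‖ / (2 * ((j:ℝ) + 1))) / (‖w j‖ / 2) = 2 * (1 / ((j:ℝ) + 1)) := by
        have := (hwpos j).ne'
        field_simp
      calc ‖‖y j‖⁻¹ • y j - ‖w j‖⁻¹ • w j‖ ≤ 2 * ‖y j - w j‖ / ‖y j‖ := h0
        _ ≤ 2 * (1 / ((j:ℝ) + 1)) := by rw [← h3]; exact h2
    · simpa using tendsto_one_div_add_atTop_nhds_zero_nat.const_mul (2:ℝ)
  have hyunit : Tendsto (fun j => ‖y j‖⁻¹ • y j) atTop (𝓝 v) := by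
    have := hdiff.add hulim
    simpa using this
  have hvdir : v ∈ dirSet A := ⟨hv1, y, hyA, hyne, hylim, hyunit⟩
  refine ⟨ms, ?_⟩
  apply squeeze_zero (fun j => div_nonneg (infDist_nonneg) (norm_nonneg _))
    (g := fun j => ‖‖w j‖⁻¹ • w j - v‖)
  · intro j
    have hmemLD : ‖w j‖ • v ∈ LD A := ⟨‖w j‖, norm_nonneg _, v, hvdir, rfl⟩
    have h1 : infDist (w j) (LD A) ≤ ‖w j - ‖w j‖ • v‖ := by
      simpa [dist_eq_norm] using infDist_le_dist_of_mem hmemLD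
    have h2 : ‖w j - ‖w j‖ • v‖ = ‖w j‖ * ‖‖w j‖⁻¹ • w j - v‖ := by
      have hkey : ‖w j‖ • (‖w j‖⁻¹ • w j - v) = w j - ‖w j‖ • v := by
        rw [smul_sub, smul_inv_smul₀ (hwpos j).ne']
      rw [← hkey, norm_smul, Real.norm_of_nonneg (norm_nonneg _)]
    rw [div_le_iff₀ (hwpos j)]
    calc infDist (w j) (LD A) ≤ ‖w j - ‖w j‖ • v‖ := h1
      _ = ‖w j‖ * ‖‖w j‖⁻¹ • w j - v‖ := h2
      _ = ‖‖w j‖⁻¹ • w j - v‖ * ‖w j‖ := mul_comm _ _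
  · have := hulim.sub (tendsto_const_nhds (x := v))
    rw [sub_self] at this
    exact tendsto_zero_iff_norm_tendsto_zero.1 this

/-- Claim in Proposition 4.11: `dist(x, LD(A))/‖x‖ → 0` as `x → 0` in `closure A`. -/
theorem stmt9 (S : OMinStructure) (n : ℕ) (A : Set (E n))
    (hdef : A ∈ S.defin n) (hA : (0 : E n) ∈ closure A) :
    Tendsto (fun x : E n => infDist x (LD A) / ‖x‖)
      (𝓝[closure A \ {0}] (0 : E n)) (𝓝 0) := by
  rw [tendsto_iff_seq_tendsto]
  intro z hz
  rw [tendsto_nhdsWithin_iff] at hz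
  obtain ⟨hz0, hzmem⟩ := hz
  obtain ⟨N, hN⟩ := eventually_atTop.1 hzmem
  rw [← tendsto_add_atTop_iff_nat N]
  apply key_seq A (fun i => z (i + N))
  · intro i; exact (hN (i + N) (by omega)).1
  · intro i
    intro h
    exact (hN (i + N) (by omega)).2 (by simp [h])
  · exact hz0.comp (tendsto_add_atTop_nat N)
end
end

section
/- A set-germ A at 0 ∈ ℝⁿ satisfies the weak sequence selection property (WSSP) if and only if it satisfies the sequence selection property (SSP). -/
open Set Filter Topology Metric MeasureTheory
open scoped NNReal ENNReal

noncomputable section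

/-- Lemma 5.10: conditions (SSP) and (WSSP) are equivalent. -/
theorem stmt12 (n : ℕ) (A : Set (E n)) (hA : (0 : E n) ∈ closure A) :
    WSSP A ↔ SSP A := by
  constructor
  · intro hW a ha0 haT hdir
    obtain ⟨v, hv, hvT⟩ := hdir
    have hAne : A.Nonempty := by
      rw [← closure_nonempty_iff]; exact ⟨0, hA⟩
    have hnorm : ∀ m, (0:ℝ) < ‖a m‖ := fun m => norm_pos_iff.2 (ha0 m)
    set f : ℕ → ℝ := fun m => infDist (a m) A / ‖a m‖ with hfdef
    have hf0 : ∀ m, 0 ≤ f m := fun m =>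
      div_nonneg infDist_nonneg (norm_nonneg _)
    have hfT : Tendsto f atTop (𝓝 0) := by
      by_contra hcon
      rw [Metric.tendsto_atTop] at hcon
      push_neg at hcon
      obtain ⟨ε, hε, hfreq⟩ := hcon
      have hfreq' : ∃ᶠ m in atTop, ε ≤ f m := by
        rw [frequently_atTop]
        intro N
        obtain ⟨m, hmN, hm⟩ := hfreq N
        refine ⟨m, hmN, ?_⟩
        have : dist (f m) 0 = f m := by
          rw [Real.dist_eq, sub_zero, abs_of_nonneg (hf0 m)]
        linarith [hm]
      obtain ⟨ψ, hψ, hψε⟩ := Filter.extraction_of_frequently_atTop hfreq'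
      obtain ⟨φ, hφ, b, hbA, hbT⟩ := hW (a ∘ ψ) (fun m => ha0 _)
        (haT.comp hψ.tendsto_atTop) ⟨v, hv, hvT.comp hψ.tendsto_atTop⟩
      have hle : ∀ j, f (ψ (φ j)) ≤ ‖(a ∘ ψ) (φ j) - b j‖ / ‖(a ∘ ψ) (φ j)‖ := by
        intro j
        apply div_le_div_of_nonneg_right _ (hnorm _).le
        calc infDist (a (ψ (φ j))) A ≤ dist (a (ψ (φ j))) (b j) :=
              infDist_le_dist_of_mem (hbA j)
          _ = ‖(a ∘ ψ) (φ j) - b j‖ := by rw [dist_eq_norm]; rfl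
      obtain ⟨J, hJ⟩ := (Metric.tendsto_atTop.1 hbT) ε hε
      have h1 := hJ J le_rfl
      have h2 := hle J
      have h3 := hψε (φ J)
      have h4 : dist (‖(a ∘ ψ) (φ J) - b J‖ / ‖(a ∘ ψ) (φ J)‖) 0
          = ‖(a ∘ ψ) (φ J) - b J‖ / ‖(a ∘ ψ) (φ J)‖ := by
        rw [Real.dist_eq, sub_zero, abs_of_nonneg (div_nonneg (norm_nonneg _) (norm_nonneg _))]
      rw [h4] at h1
      linarith
    -- choose b
    have hchoice : ∀ m : ℕ, ∃ c ∈ A,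
        dist (a m) c < infDist (a m) A + ‖a m‖ * (1 / (m + 1)) := by
      intro m
      apply (infDist_lt_iff hAne).1
      have : (0:ℝ) < ‖a m‖ * (1 / (m + 1)) := mul_pos (hnorm m) (by positivity)
      linarith
    choose b hbA hbd using hchoice
    refine ⟨b, hbA, ?_⟩
    have hg : Tendsto (fun m : ℕ => f m + 1 / (m + 1 : ℝ)) atTop (𝓝 0) := by
      have := hfT.add tendsto_one_div_add_atTop_nhds_zero_nat
      simpa using this
    apply squeeze_zero (fun m => div_nonneg (norm_nonneg _) (norm_nonneg _)) _ hg
    intro m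
    have hd : ‖a m - b m‖ ≤ infDist (a m) A + ‖a m‖ * (1 / (m + 1)) := by
      rw [← dist_eq_norm]; exact (hbd m).le
    have hkey := div_le_div_of_nonneg_right hd (hnorm m).le
    have heq : (infDist (a m) A + ‖a m‖ * (1 / (m + 1))) / ‖a m‖
        = f m + 1 / (m + 1) := by
      rw [add_div, mul_div_cancel_left₀ _ (hnorm m).ne']
    rw [heq] at hkey
    exact hkey
  · intro hS a ha0 haT hdir
    obtain ⟨b, hbA, hbT⟩ := hS a ha0 haT hdir
    exact ⟨id, strictMono_id, b, hbA, hbT⟩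
end
end

section
/- Every set-germ A at 0 ∈ ℝⁿ that is definable in an o-minimal structure on ℝ (with 0 ∈ closure(A)) satisfies the sequence selection property (SSP). In particular, every cone LD(A) over a direction set satisfies (SSP). -/
open Set Filter Topology Metric MeasureTheory
open scoped NNReal ENNReal

noncomputable section

/-! ### Auxiliary lemmas -/

lemma norm_sq_sum' {n : ℕ} (w : E n) : ‖w‖^2 = ∑ i, (w i)^2 := by
  rw [EuclideanSpace.norm_eq, Real.sq_sqrt (by positivity)]
  simp [Real.norm_eq_abs, sq_abs]

lemma sum_expr' {n : ℕ} (t : ℝ) (v y : E n) :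
    ∑ i, (v i * t - y i)^2 = ‖t • v - y‖^2 := by
  rw [norm_sq_sum']
  congr 1; funext i
  simp [PiLp.sub_apply, PiLp.smul_apply, smul_eq_mul, mul_comm]

/-- The direction set is closed under limits of unit vectors. -/
lemma dirSet_of_tendsto' {n : ℕ} {A : Set (E n)} {c : ℕ → E n} {v : E n}
    (hc : ∀ k, c k ∈ dirSet A) (hv1 : ‖v‖ = 1) (hlim : Tendsto c atTop (𝓝 v)) :
    v ∈ dirSet A := by
  have h : ∀ k : ℕ, ∃ z : E n, z ∈ A ∧ z ≠ 0 ∧ ‖z‖ < 1/(k+1) ∧ ‖‖z‖⁻¹ • z - c k‖ < 1/(k+1) := by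
    intro k
    obtain ⟨_, x, hxA, hx0, hxlim, hxdir⟩ := hc k
    have h1 : ∀ᶠ i in atTop, ‖x i‖ < 1/(k+1) := by
      have hn : Tendsto (fun i => ‖x i‖) atTop (𝓝 0) := by simpa using hxlim.norm
      exact hn.eventually_lt_const (by positivity)
    have h2 : ∀ᶠ i in atTop, ‖‖x i‖⁻¹ • x i - c k‖ < 1/(k+1) := by
      have := Metric.tendsto_nhds.mp hxdir (1/(k+1)) (by positivity)
      simpa [dist_eq_norm] using this
    obtain ⟨i, hi1, hi2⟩ := (h1.and h2).exists
    exact ⟨x i, hxA i, hx0 i, hi1, hi2⟩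
  choose z hzA hz0 hzn hzd using h
  refine ⟨hv1, z, hzA, hz0, ?_, ?_⟩
  · exact squeeze_zero_norm (fun k => (hzn k).le) tendsto_one_div_add_atTop_nhds_zero_nat
  · rw [tendsto_iff_norm_sub_tendsto_zero]
    refine squeeze_zero (fun k => norm_nonneg _) (g := fun k => 1/(k+1) + ‖c k - v‖) ?_ ?_
    · intro k
      calc ‖‖z k‖⁻¹ • z k - v‖ ≤ ‖‖z k‖⁻¹ • z k - c k‖ + ‖c k - v‖ :=
            norm_sub_le_norm_sub_add_norm_sub _ _ _
        _ ≤ 1/(k+1) + ‖c k - v‖ := by linarith [hzd k]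
    · simpa using
        tendsto_one_div_add_atTop_nhds_zero_nat.add (tendsto_iff_norm_sub_tendsto_zero.mp hlim)

/-- Iterated projection down to one variable. -/
lemma projIter' (S : OMinStructure) : ∀ (k : ℕ) (C : Set (E (k+1))), C ∈ S.defin (k+1) →
    {x : E 1 | ∃ w : E (k+1), w 0 = x 0 ∧ w ∈ C} ∈ S.defin 1 := by
  intro k
  induction k with
  | zero =>
    intro C hC
    have he : {x : E 1 | ∃ w : E 1, w 0 = x 0 ∧ w ∈ C} = C := by
      ext x
      constructor
      · rintro ⟨w, hw0, hw⟩
        have hwx : w = x := by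
          ext i
          have : i = 0 := Subsingleton.elim _ _
          rw [this]; exact hw0
        rwa [hwx] at hw
      · intro hx; exact ⟨x, rfl, hx⟩
    rw [he]; exact hC
  | succ k ih =>
    intro C hC
    have h1 := S.proj_mem hC
    have h2 := ih _ h1
    have he : {x : E 1 | ∃ w : E (k+1), w 0 = x 0 ∧
          w ∈ {u : E (k+1) | ∃ t : ℝ, toE (k+1+1) (Fin.snoc (fun j => u j) t) ∈ C}}
        = {x : E 1 | ∃ w : E (k+1+1), w 0 = x 0 ∧ w ∈ C} := by
      ext x
      simp only [Set.mem_setOf_eq]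
      constructor
      · rintro ⟨w, hw0, t, ht⟩
        refine ⟨toE (k+1+1) (Fin.snoc (fun j => w j) t), ?_, ht⟩
        show (Fin.snoc (fun j => w j) t : Fin (k+2) → ℝ) 0 = x 0
        rw [← Fin.castSucc_zero, Fin.snoc_castSucc]; exact hw0
      · rintro ⟨w, hw0, hw⟩
        refine ⟨toE (k+1) (fun i => w i.castSucc), ?_, w (Fin.last (k+1)), ?_⟩
        · show w (Fin.castSucc 0) = x 0
          rw [Fin.castSucc_zero]; exact hw0
        · have hww : toE (k+1+1) (Fin.snoc (fun j => (toE (k+1) (fun i => w i.castSucc)) j)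
              (w (Fin.last (k+1)))) = w := by
            ext i
            exact congrFun (Fin.snoc_init_self (w : Fin (k+2) → ℝ)) i
          rw [hww]; exact hw
    rwa [he] at h2

/-- The set `{t | ∃ y ∈ A, ‖t•v - y‖² < ε²t²}` is definable. -/
lemma defin_T' (S : OMinStructure) {n : ℕ} {A : Set (E n)} (hA : A ∈ S.defin n)
    (v : E n) (ε : ℝ) :
    {x : E 1 | ∃ y : E n, y ∈ A ∧ 0 < ε^2 * (x 0)^2 - ‖(x 0) • v - y‖^2} ∈ S.defin 1 := by
  classical
  have h1 := S.prod_right_mem hA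
  have h2 := S.prod_left_mem h1
  set P : MvPolynomial (Fin (n+2)) ℝ :=
    (MvPolynomial.X (Fin.last (n+1)))^2 *
      (MvPolynomial.C (ε^2) * (MvPolynomial.X 0)^2
        - ∑ i : Fin n, (MvPolynomial.C (v i) * MvPolynomial.X 0
            - MvPolynomial.X (i.succ.castSucc))^2)
      - 1 with hP
  have h3 := S.poly_mem P
  have hev : ∀ z : E (n+2), MvPolynomial.eval (fun i => z i) P
      = (z (Fin.last (n+1)))^2 *
          (ε^2 * (z 0)^2 - ∑ i : Fin n, (v i * z 0 - z (i.succ.castSucc))^2) - 1 := by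
    intro z
    simp only [hP, map_sub, map_mul, map_pow, map_sum, map_one,
      MvPolynomial.eval_C, MvPolynomial.eval_X]
  have h4 : ({x : E (n+1+1) | toE (n+1) (fun i : Fin (n+1) => x i.castSucc) ∈
        {x : E (n+1) | toE n (fun i : Fin n => x i.succ) ∈ A}} ∩
      {x : E (n+2) | MvPolynomial.eval (fun i => x i) P = 0}) ∈ S.defin (n+2) := by
    have h5 := S.compl_mem (S.union_mem (S.compl_mem h2) (S.compl_mem h3))
    rwa [Set.compl_union, compl_compl, compl_compl] at h5
  have h6 := S.proj_mem h4
  have h7 := projIter' S n _ h6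
  have he : {x : E 1 | ∃ w : E (n+1), w 0 = x 0 ∧
        w ∈ {u : E (n+1) | ∃ t : ℝ, toE (n+1+1) (Fin.snoc (fun j => u j) t) ∈
          ({x : E (n+1+1) | toE (n+1) (fun i : Fin (n+1) => x i.castSucc) ∈
              {x : E (n+1) | toE n (fun i : Fin n => x i.succ) ∈ A}} ∩
            {x : E (n+2) | MvPolynomial.eval (fun i => x i) P = 0})}}
      = {x : E 1 | ∃ y : E n, y ∈ A ∧ 0 < ε^2 * (x 0)^2 - ‖(x 0) • v - y‖^2} := by
    ext x
    simp only [Set.mem_setOf_eq, Set.mem_inter_iff]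
    constructor
    · rintro ⟨w, hw0, s, hmem, hpoly⟩
      set z : E (n+2) := toE (n+1+1) (Fin.snoc (fun j => w j) s) with hz
      have hz0 : z 0 = x 0 := by
        show (Fin.snoc (fun j => w j) s : Fin (n+2) → ℝ) 0 = x 0
        rw [← Fin.castSucc_zero, Fin.snoc_castSucc]; exact hw0
      have hzc : ∀ i : Fin (n+1), z i.castSucc = w i := fun i => by
        show (Fin.snoc (fun j => w j) _ : Fin (n+2) → ℝ) i.castSucc = w i; exact Fin.snoc_castSucc _ _ i
      have hzl : z (Fin.last (n+1)) = s := by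
        show (Fin.snoc (fun j => w j) s : Fin (n+2) → ℝ) (Fin.last (n+1)) = s; exact Fin.snoc_last _ _
      refine ⟨toE n (fun i => w i.succ), ?_, ?_⟩
      · have : toE (n+1) (fun i : Fin (n+1) => z i.castSucc) = w := by
          ext i; exact hzc i
        rwa [this] at hmem
      · rw [hev z] at hpoly
        have hsum : ∑ i : Fin n, (v i * z 0 - z (i.succ.castSucc))^2
            = ‖(x 0) • v - toE n (fun i => w i.succ)‖^2 := by
          rw [← sum_expr']
          congr 1; funext i
          rw [hz0, hzc i.succ]
          rfl
        rw [hsum, hzl, hz0] at hpoly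
        nlinarith [sq_nonneg s, hpoly]
    · rintro ⟨y, hyA, hQ⟩
      set Q : ℝ := ε^2 * (x 0)^2 - ‖(x 0) • v - y‖^2 with hQdef
      refine ⟨toE (n+1) (Fin.cons (x 0) (fun i => y i)),
        (by show (Fin.cons (x 0) (fun i => y i) : Fin (n+1) → ℝ) 0 = x 0; rw [Fin.cons_zero]),
        (Real.sqrt Q)⁻¹, ?_, ?_⟩
      · set w : E (n+1) := toE (n+1) (Fin.cons (x 0) (fun i => y i)) with hwdef
        have : toE (n+1) (fun i : Fin (n+1) =>
            (toE (n+1+1) (Fin.snoc (fun j => w j) ((Real.sqrt Q)⁻¹))) i.castSucc) = w := by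
          ext i
          show (Fin.snoc (fun j => w j) ((Real.sqrt Q)⁻¹) : Fin (n+2) → ℝ) i.castSucc = w i
          rw [Fin.snoc_castSucc]
        rw [this]
        show toE n (fun i => w i.succ) ∈ A
        have hwy : toE n (fun i => w i.succ) = y := by
          ext i
          show (Fin.cons (x 0) (fun i => y i) : Fin (n+1) → ℝ) i.succ = y i
          rw [Fin.cons_succ]
        rwa [hwy]
      · set w : E (n+1) := toE (n+1) (Fin.cons (x 0) (fun i => y i)) with hwdef
        set z : E (n+2) := toE (n+1+1) (Fin.snoc (fun j => w j) ((Real.sqrt Q)⁻¹)) with hz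
        rw [hev z]
        have hz0 : z 0 = x 0 := by
          show (Fin.snoc (fun j => w j) ((Real.sqrt Q)⁻¹) : Fin (n+2) → ℝ) 0 = x 0
          rw [← Fin.castSucc_zero, Fin.snoc_castSucc]
          show (Fin.cons (x 0) (fun i => y i) : Fin (n+1) → ℝ) 0 = x 0
          rw [Fin.cons_zero]
        have hzc : ∀ i : Fin (n+1), z i.castSucc = w i := fun i => by
          show (Fin.snoc (fun j => w j) ((Real.sqrt Q)⁻¹) : Fin (n+2) → ℝ) i.castSucc = w i; exact Fin.snoc_castSucc _ _ i
        have hzl : z (Fin.last (n+1)) = (Real.sqrt Q)⁻¹ := by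
          show (Fin.snoc (fun j => w j) ((Real.sqrt Q)⁻¹) : Fin (n+2) → ℝ) (Fin.last (n+1)) = _; exact Fin.snoc_last _ _
        have hsum : ∑ i : Fin n, (v i * z 0 - z (i.succ.castSucc))^2 = ‖(x 0) • v - y‖^2 := by
          rw [← sum_expr']
          congr 1; funext i
          rw [hz0, hzc i.succ]
          show (v i * x 0 - (Fin.cons (x 0) (fun i => y i) : Fin (n+1) → ℝ) i.succ)^2 = (v i * x 0 - y i)^2
          rw [Fin.cons_succ]
        rw [hsum, hzl, hz0, ← hQdef]
        have hs2 : ((Real.sqrt Q)⁻¹)^2 = Q⁻¹ := by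
          rw [inv_pow, Real.sq_sqrt hQ.le]
        rw [hs2, inv_mul_cancel₀ (ne_of_gt hQ), sub_self]
  rw [he] at h7
  exact h7

/-- Key lemma: near `0`, every positive scale `t` admits a point of `A` within `ε t` of `t•v`. -/
lemma key' (S : OMinStructure) {n : ℕ} {A : Set (E n)} (hA : A ∈ S.defin n) {v : E n}
    (hv : v ∈ dirSet A) {ε : ℝ} (hε : 0 < ε) :
    ∃ δ > 0, ∀ t : ℝ, 0 < t → t < δ → ∃ y ∈ A, ‖t • v - y‖ < ε * t := by
  obtain ⟨hv1, x, hxA, hx0, hxlim, hxdir⟩ := hv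
  obtain ⟨F, hF, hFeq⟩ := S.o_minimal (defin_T' S hA v ε)
  have hTr : ∀ t : ℝ, t ∈ (⋃₀ ↑F : Set ℝ) ↔
      ∃ y : E n, y ∈ A ∧ 0 < ε^2 * t^2 - ‖t • v - y‖^2 := by
    intro t
    rw [← hFeq]
    exact Iff.rfl
  set s : ℕ → ℝ := fun i => ‖x i‖ with hs
  have hspos : ∀ i, 0 < s i := fun i => norm_pos_iff.mpr (hx0 i)
  have hs0 : Tendsto s atTop (𝓝 0) := by simpa [hs] using hxlim.norm
  have hmem : ∀ᶠ i in atTop, s i ∈ (⋃₀ ↑F : Set ℝ) := by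
    have hd : ∀ᶠ i in atTop, ‖v - ‖x i‖⁻¹ • x i‖ < ε := by
      have := Metric.tendsto_nhds.mp hxdir ε hε
      filter_upwards [this] with i hi
      rw [dist_eq_norm] at hi
      rwa [norm_sub_rev]
    filter_upwards [hd] with i hi
    rw [hTr]
    refine ⟨x i, hxA i, ?_⟩
    have hxi : s i • (v - ‖x i‖⁻¹ • x i) = s i • v - x i := by
      rw [smul_sub, smul_inv_smul₀ (norm_ne_zero_iff.mpr (hx0 i))]
    have hnorm : ‖s i • v - x i‖ = s i * ‖v - ‖x i‖⁻¹ • x i‖ := by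
      rw [← hxi, norm_smul, Real.norm_eq_abs, abs_of_pos (hspos i)]
    rw [hnorm]
    have h1 := hspos i
    have hnn := norm_nonneg (v - ‖x i‖⁻¹ • x i)
    have h2 : 0 < (ε - ‖v - ‖x i‖⁻¹ • x i‖) * (ε + ‖v - ‖x i‖⁻¹ • x i‖) :=
      mul_pos (by linarith) (by linarith)
    nlinarith [mul_pos (mul_pos h1 h1) h2]
  have hfin : ∃ I ∈ F, ∃ᶠ i in atTop, s i ∈ I := by
    by_contra h
    push_neg at h
    have hall : ∀ᶠ i in atTop, ∀ I ∈ F, s i ∉ I :=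
      (Finset.eventually_all F).2 fun I hI => h I hI
    obtain ⟨i, hi1, hi2⟩ := (hmem.and hall).exists
    obtain ⟨I, hIF, hiI⟩ := hi1
    exact hi2 I hIF hiI
  obtain ⟨I, hIF, hfreq⟩ := hfin
  have hsub : ∀ t : ℝ, t ∈ I → t ∈ (⋃₀ ↑F : Set ℝ) := fun t ht => ⟨I, hIF, ht⟩
  have hconc : ∀ δ : ℝ, 0 < δ → (Ioo (0:ℝ) δ ⊆ (⋃₀ ↑F : Set ℝ)) →
      ∃ δ' > 0, ∀ t : ℝ, 0 < t → t < δ' → ∃ y ∈ A, ‖t • v - y‖ < ε * t := by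
    intro δ hδ hss
    refine ⟨δ, hδ, fun t ht1 ht2 => ?_⟩
    obtain ⟨y, hyA, hQ⟩ := (hTr t).mp (hss ⟨ht1, ht2⟩)
    refine ⟨y, hyA, ?_⟩
    have h2 : ‖t • v - y‖^2 < (ε * t)^2 := by nlinarith
    exact lt_of_pow_lt_pow_left₀ 2 (by positivity) h2
  rcases hF I hIF with ⟨a, rfl⟩ | ⟨a, b, rfl⟩ | ⟨a, rfl⟩ | ⟨a, rfl⟩ | rfl
  · exfalso
    obtain ⟨i, hi⟩ := hfreq.exists
    have ha : 0 < a := by rw [Set.mem_singleton_iff] at hi; rw [← hi]; exact hspos i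
    have hev : ∀ᶠ i in atTop, s i < a := hs0.eventually_lt_const ha
    obtain ⟨j, hj1, hj2⟩ := (hfreq.and_eventually hev).exists
    rw [Set.mem_singleton_iff] at hj1
    linarith
  · obtain ⟨i, hi⟩ := hfreq.exists
    have hb : 0 < b := lt_trans (hspos i) hi.2
    have ha : a ≤ 0 := by
      by_contra h
      push_neg at h
      have hev : ∀ᶠ i in atTop, s i < a := hs0.eventually_lt_const h
      obtain ⟨j, hj1, hj2⟩ := (hfreq.and_eventually hev).exists
      linarith [hj1.1]
    exact hconc b hb fun t ht => hsub t ⟨lt_of_le_of_lt ha ht.1, ht.2⟩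
  · obtain ⟨i, hi⟩ := hfreq.exists
    have ha : 0 < a := lt_trans (hspos i) hi
    exact hconc a ha fun t ht => hsub t ht.2
  · have ha : a ≤ 0 := by
      by_contra h
      push_neg at h
      have hev : ∀ᶠ i in atTop, s i < a := hs0.eventually_lt_const h
      obtain ⟨j, hj1, hj2⟩ := (hfreq.and_eventually hev).exists
      exact absurd hj1 (not_lt.mpr hj2.le)
    exact hconc 1 one_pos fun t ht => hsub t (lt_of_le_of_lt ha ht.1)
  · exact hconc 1 one_pos fun t ht => hsub t (Set.mem_univ t)



/-- Remark 5.2 (1),(3): definable set-germs satisfy (SSP), and every tangent cone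
`LD(A)` satisfies (SSP). -/
theorem stmt13 (S : OMinStructure) (n : ℕ) :
    (∀ A : Set (E n), A ∈ S.defin n → (0 : E n) ∈ closure A → SSP A) ∧
    (∀ A : Set (E n), SSP (LD A)) := by
  constructor
  · -- definable sets satisfy SSP
    intro A hA hcl
    intro a ha0 halim hvex
    obtain ⟨v, hv, hdir⟩ := hvex
    have hAne : A.Nonempty := closure_nonempty_iff.mp ⟨0, hcl⟩
    have hnorm : ∀ m, 0 < ‖a m‖ := fun m => norm_pos_iff.mpr (ha0 m)
    have hna : Tendsto (fun m => ‖a m‖) atTop (𝓝 0) := by simpa using halim.norm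
    have hf : Tendsto (fun m => infDist (a m) A / ‖a m‖) atTop (𝓝 0) := by
      rw [Metric.tendsto_nhds]
      intro ε hε
      obtain ⟨δ, hδ, hkey⟩ := key' S hA hv (half_pos hε)
      have h1 : ∀ᶠ m in atTop, ‖a m‖ < δ := hna.eventually_lt_const hδ
      have h2 : ∀ᶠ m in atTop, ‖(‖a m‖⁻¹ • a m) - v‖ < ε/2 := by
        have := Metric.tendsto_nhds.mp hdir (ε/2) (half_pos hε)
        simpa [dist_eq_norm] using this
      filter_upwards [h1, h2] with m hm1 hm2
      obtain ⟨y, hyA, hy⟩ := hkey ‖a m‖ (hnorm m) hm1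
      have key1 : infDist (a m) A ≤ ‖a m - y‖ := by
        rw [← dist_eq_norm]; exact infDist_le_dist_of_mem hyA
      have htr : ‖a m - y‖ ≤ ‖a m - ‖a m‖ • v‖ + ‖‖a m‖ • v - y‖ :=
        norm_sub_le_norm_sub_add_norm_sub _ _ _
      have e1 : ‖a m - ‖a m‖ • v‖ = ‖a m‖ * ‖(‖a m‖⁻¹ • a m) - v‖ := by
        have : ‖a m‖ • ((‖a m‖⁻¹ • a m) - v) = a m - ‖a m‖ • v := by
          rw [smul_sub, smul_inv_smul₀ (hnorm m).ne']
        rw [← this, norm_smul, Real.norm_eq_abs, abs_of_pos (hnorm m)]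
      have hlt : infDist (a m) A < ε * ‖a m‖ := by
        have := hnorm m
        calc infDist (a m) A ≤ ‖a m - ‖a m‖ • v‖ + ‖‖a m‖ • v - y‖ := le_trans key1 htr
          _ < ‖a m‖ * (ε/2) + (ε/2) * ‖a m‖ := by
              rw [e1]
              have := mul_lt_mul_of_pos_left hm2 (hnorm m)
              linarith
          _ = ε * ‖a m‖ := by ring
      have hnn : 0 ≤ infDist (a m) A / ‖a m‖ :=
        div_nonneg infDist_nonneg (norm_nonneg _)
      rw [Real.dist_eq, sub_zero, abs_of_nonneg hnn]
      rw [div_lt_iff₀ (hnorm m)]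
      linarith
    have hb : ∀ m, ∃ y ∈ A, dist (a m) y < infDist (a m) A + ‖a m‖ * (1/(m+1)) := by
      intro m
      apply (infDist_lt_iff hAne).mp
      have hpos : 0 < ‖a m‖ * (1/(m+1)) := by
        have := hnorm m; positivity
      linarith
    choose b hbA hbd using hb
    refine ⟨b, hbA, ?_⟩
    refine squeeze_zero (fun m => div_nonneg (norm_nonneg _) (norm_nonneg _))
      (g := fun m => infDist (a m) A / ‖a m‖ + 1/(m+1)) ?_ ?_
    · intro m
      have h := (hbd m).le
      rw [dist_eq_norm] at h
      calc ‖a m - b m‖ / ‖a m‖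
          ≤ (infDist (a m) A + ‖a m‖ * (1/(m+1))) / ‖a m‖ := by
            gcongr
        _ = infDist (a m) A / ‖a m‖ + 1/(m+1) := by
            rw [add_div, mul_div_assoc]
            rw [mul_div_assoc']
            congr 1
            rw [mul_comm, mul_div_assoc, div_self (hnorm m).ne', mul_one]
    · simpa using hf.add tendsto_one_div_add_atTop_nhds_zero_nat
  · -- LD(A) satisfies SSP
    intro A a ha0 halim hvex
    obtain ⟨v, hv, hdir⟩ := hvex
    obtain ⟨hv1, x, hxLD, hx0, hxlim, hxdir⟩ := hv
    have hdirs : ∀ i, (‖x i‖⁻¹ • x i) ∈ dirSet A := by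
      intro i
      obtain ⟨t, ht, c, hc, hxi⟩ := hxLD i
      have ht' : 0 < t := by
        rcases ht.lt_or_eq with h | h
        · exact h
        · exfalso; exact hx0 i (by rw [hxi, ← h, zero_smul])
      have hn : ‖x i‖ = t := by
        rw [hxi, norm_smul, Real.norm_eq_abs, abs_of_pos ht', hc.1, mul_one]
      rw [hn, hxi, smul_smul, inv_mul_cancel₀ ht'.ne', one_smul]
      exact hc
    have hvA : v ∈ dirSet A := dirSet_of_tendsto' hdirs hv1 hxdir
    refine ⟨fun m => ‖a m‖ • v, fun m => ⟨‖a m‖, norm_nonneg _, v, hvA, rfl⟩, ?_⟩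
    have heq : ∀ m, ‖a m - ‖a m‖ • v‖ / ‖a m‖ = ‖(‖a m‖⁻¹ • a m) - v‖ := by
      intro m
      have hm : 0 < ‖a m‖ := norm_pos_iff.mpr (ha0 m)
      have : ‖a m‖ • ((‖a m‖⁻¹ • a m) - v) = a m - ‖a m‖ • v := by
        rw [smul_sub, smul_inv_smul₀ hm.ne']
      rw [← this, norm_smul, Real.norm_eq_abs, abs_of_pos hm, mul_comm,
        mul_div_assoc, div_self hm.ne', mul_one]
    have hlim2 : Tendsto (fun m => ‖(‖a m‖⁻¹ • a m) - v‖) atTop (𝓝 0) :=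
      tendsto_iff_norm_sub_tendsto_zero.mp hdir
    refine Tendsto.congr (fun m => (heq m).symm) hlim2
end
end

section
/- Let α, β be linear subspaces of ℝⁿ with dim α < dim β, and let θ ∈ Φ. Then the ratio of volumes Vol(ST_θ(α) ∩ B_ε(0)) / Vol(ST_θ(β) ∩ B_ε(0)) tends to 0 as ε → 0⁺. -/
open Set Filter Topology Metric MeasureTheory
open scoped NNReal ENNReal
open scoped RealInnerProductSpace Pointwise

noncomputable section

namespace St17

variable {n : ℕ}

/-- Orthogonal projection onto `γ`, as an endomorphism of the ambient space. -/
def Pl (γ : Submodule ℝ (E n)) : E n →ₗ[ℝ] E n :=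
  γ.subtype.comp (Submodule.orthogonalProjectionOnto γ).toLinearMap

lemma Pl_mem (γ : Submodule ℝ (E n)) (x : E n) : Pl γ x ∈ γ := (Submodule.orthogonalProjectionOnto γ x).2

lemma sub_Pl_mem (γ : Submodule ℝ (E n)) (x : E n) : x - Pl γ x ∈ γᗮ :=
  Submodule.sub_starProjection_mem_orthogonal x

lemma Pl_eq_self {γ : Submodule ℝ (E n)} {x : E n} (h : x ∈ γ) : Pl γ x = x := by
  have := Submodule.orthogonalProjectionOnto_mem_subspace_eq_self (K := γ) ⟨x, h⟩
  simpa [Pl] using congrArg (γ.subtype) this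

lemma Pl_eq_zero {γ : Submodule ℝ (E n)} {x : E n} (h : x ∈ γᗮ) : Pl γ x = 0 := by
  have := Submodule.orthogonalProjectionOnto_apply_of_mem_orthogonal (K := γ) h
  simpa [Pl] using congrArg (γ.subtype) this

lemma norm_sq_add {γ : Submodule ℝ (E n)} {a b : E n} (ha : a ∈ γ) (hb : b ∈ γᗮ) :
    ‖a + b‖ ^ 2 = ‖a‖ ^ 2 + ‖b‖ ^ 2 := by
  have h0 : (inner ℝ a b : ℝ) = 0 := Submodule.inner_right_of_mem_orthogonal ha hb
  rw [norm_add_sq_real, h0]; ring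

lemma norm_left_le {γ : Submodule ℝ (E n)} {a b : E n} (ha : a ∈ γ) (hb : b ∈ γᗮ) :
    ‖a‖ ≤ ‖a + b‖ := by
  have h := norm_sq_add ha hb
  nlinarith [norm_nonneg a, norm_nonneg b, norm_nonneg (a + b), sq_nonneg ‖b‖]

lemma norm_right_le {γ : Submodule ℝ (E n)} {a b : E n} (ha : a ∈ γ) (hb : b ∈ γᗮ) :
    ‖b‖ ≤ ‖a + b‖ := by
  have h := norm_sq_add ha hb
  nlinarith [norm_nonneg a, norm_nonneg b, norm_nonneg (a + b)]

lemma decomp (γ : Submodule ℝ (E n)) (x : E n) : Pl γ x + (x - Pl γ x) = x := by abel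

lemma norm_Pl_le (γ : Submodule ℝ (E n)) (x : E n) : ‖Pl γ x‖ ≤ ‖x‖ := by
  have := norm_left_le (Pl_mem γ x) (sub_Pl_mem γ x)
  rwa [decomp] at this

lemma norm_sub_Pl_le (γ : Submodule ℝ (E n)) (x : E n) : ‖x - Pl γ x‖ ≤ ‖x‖ := by
  have := norm_right_le (Pl_mem γ x) (sub_Pl_mem γ x)
  rwa [decomp] at this

lemma infDist_eq (γ : Submodule ℝ (E n)) (x : E n) :
    infDist x (γ : Set (E n)) = ‖x - Pl γ x‖ := by
  refine le_antisymm ?_ ?_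
  · have := infDist_le_dist_of_mem (x := x) (Pl_mem γ x)
    rwa [dist_eq_norm] at this
  · rw [infDist_eq_iInf]
    refine le_ciInf fun y => ?_
    rw [dist_eq_norm]
    have hy : (x - Pl γ x) + (Pl γ x - y) = x - y := by abel
    have h1 : (Pl γ x - (y : E n)) ∈ γ := sub_mem (Pl_mem γ x) y.2
    have := norm_right_le h1 (sub_Pl_mem γ x)
    calc ‖x - Pl γ x‖ ≤ ‖(Pl γ x - (y : E n)) + (x - Pl γ x)‖ := this
      _ = ‖x - (y : E n)‖ := by rw [show (Pl γ x - (y:E n)) + (x - Pl γ x) = x - y by abel]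

lemma continuous_Pl (γ : Submodule ℝ (E n)) : Continuous (Pl γ) :=
  (Pl γ).continuous_of_finiteDimensional

/-- The cone of points at relative distance at most `t` from `γ`. -/
def Kc (γ : Submodule ℝ (E n)) (t : ℝ) : Set (E n) := {x | ‖x - Pl γ x‖ ≤ t * ‖x‖}

lemma measurableSet_Kc (γ : Submodule ℝ (E n)) (t : ℝ) : MeasurableSet (Kc γ t) := by
  have : IsClosed (Kc γ t) :=
    isClosed_le (continuous_norm.comp (continuous_id.sub (continuous_Pl γ)))
      (continuous_const.mul continuous_norm)
  exact this.measurableSet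

/-- Relative volume of the `t`-cone around `γ` in the unit ball. -/
def vK (γ : Submodule ℝ (E n)) (t : ℝ) : ℝ≥0∞ := volume (Kc γ t ∩ closedBall 0 1)

lemma vK_ne_top (γ : Submodule ℝ (E n)) (t : ℝ) : vK γ t ≠ ∞ :=
  (lt_of_le_of_lt (measure_mono inter_subset_right) (measure_closedBall_lt_top)).ne

/-- The linear map which is the identity on `γ` and multiplication by `t` on `γᗮ`. -/
def Mt (γ : Submodule ℝ (E n)) (t : ℝ) : E n →ₗ[ℝ] E n :=
  Pl γ + t • (LinearMap.id - Pl γ)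

lemma Mt_apply (γ : Submodule ℝ (E n)) (t : ℝ) (x : E n) :
    Mt γ t x = Pl γ x + t • (x - Pl γ x) := rfl

lemma Mt_apply_mem {γ : Submodule ℝ (E n)} {x : E n} (t : ℝ) (h : x ∈ γ) : Mt γ t x = x := by
  rw [Mt_apply, Pl_eq_self h]; simp

lemma Mt_apply_mem_orth {γ : Submodule ℝ (E n)} {x : E n} (t : ℝ) (h : x ∈ γᗮ) :
    Mt γ t x = t • x := by
  rw [Mt_apply, Pl_eq_zero h]; simp

lemma Pl_Mt (γ : Submodule ℝ (E n)) (t : ℝ) (x : E n) : Pl γ (Mt γ t x) = Pl γ x := by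
  rw [Mt_apply, map_add, _root_.map_smul, Pl_eq_self (Pl_mem γ x), Pl_eq_zero (sub_Pl_mem γ x)]
  simp

lemma det_Mt (γ : Submodule ℝ (E n)) (t : ℝ) :
    LinearMap.det (Mt γ t) = t ^ (Module.finrank ℝ γᗮ) := by
  classical
  set d := Module.finrank ℝ γ
  set e := Module.finrank ℝ γᗮ
  let b1 : Module.Basis (Fin d) ℝ γ := Module.finBasis ℝ γ
  let b2 : Module.Basis (Fin e) ℝ γᗮ := Module.finBasis ℝ γᗮ
  let eq := Submodule.prodEquivOfIsCompl γ γᗮ γ.isCompl_orthogonal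
  let bb : Module.Basis (Fin d ⊕ Fin e) ℝ (E n) := (b1.prod b2).map eq
  have hbl : ∀ i : Fin d, bb (Sum.inl i) = (b1 i : E n) := by
    intro i
    simp only [bb, Module.Basis.map_apply, Module.Basis.prod_apply, Sum.elim_inl, Function.comp]
    simp [eq, Submodule.coe_prodEquivOfIsCompl]
  have hbr : ∀ i : Fin e, bb (Sum.inr i) = (b2 i : E n) := by
    intro i
    simp only [bb, Module.Basis.map_apply, Module.Basis.prod_apply, Sum.elim_inr, Function.comp]
    simp [eq, Submodule.coe_prodEquivOfIsCompl]
  let c : Fin d ⊕ Fin e → ℝ := Sum.elim (fun _ => (1:ℝ)) (fun _ => t)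
  have hM : ∀ s, Mt γ t (bb s) = c s • bb s := by
    rintro (i | i)
    · rw [hbl, Mt_apply_mem t (b1 i).2]; simp [c]
    · rw [hbr, Mt_apply_mem_orth t (b2 i).2]; simp [c]
  have : LinearMap.toMatrix bb bb (Mt γ t) = Matrix.diagonal c := by
    ext i j
    rw [LinearMap.toMatrix_apply, hM, _root_.map_smul, Module.Basis.repr_self]
    by_cases h : i = j
    · subst h; simp [Matrix.diagonal]
    · rw [Matrix.diagonal_apply_ne' c (fun hh => h hh.symm), Finsupp.smul_single,
        Finsupp.single_apply]
      simp only [smul_eq_mul, mul_one]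
      rw [if_neg (fun hh => h hh.symm)]
  rw [← LinearMap.det_toMatrix bb, this, Matrix.det_diagonal]
  rw [Fintype.prod_sum_type]
  simp [c]


lemma vol_Mt_image (γ : Submodule ℝ (E n)) {t : ℝ} (ht : 0 < t) (s : Set (E n)) :
    volume (Mt γ t '' s) = ENNReal.ofReal (t ^ Module.finrank ℝ γᗮ) * volume s := by
  rw [Measure.addHaar_image_linearMap, det_Mt]
  congr 2
  rw [abs_of_nonneg (pow_nonneg ht.le _)]

/-- Upper bound for the cone volume. -/
lemma vK_le (γ : Submodule ℝ (E n)) {t : ℝ} (ht : 0 < t) :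
    vK γ t ≤ ENNReal.ofReal (t ^ Module.finrank ℝ γᗮ) * volume (closedBall (0 : E n) 2) := by
  rw [← vol_Mt_image γ ht]
  refine measure_mono ?_
  rintro x ⟨hxK, hx1⟩
  simp only [mem_closedBall, dist_zero_right] at hx1
  refine ⟨Pl γ x + t⁻¹ • (x - Pl γ x), ?_, ?_⟩
  · simp only [mem_closedBall, dist_zero_right]
    have hmem : t⁻¹ • (x - Pl γ x) ∈ γᗮ := Submodule.smul_mem _ _ (sub_Pl_mem γ x)
    have hsq := norm_sq_add (Pl_mem γ x) hmem
    have h1 : ‖Pl γ x‖ ≤ 1 := (norm_Pl_le γ x).trans hx1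
    have h2 : ‖t⁻¹ • (x - Pl γ x)‖ ≤ 1 := by
      rw [norm_smul, Real.norm_eq_abs, abs_of_nonneg (inv_nonneg.2 ht.le)]
      calc t⁻¹ * ‖x - Pl γ x‖ ≤ t⁻¹ * (t * ‖x‖) := by
            apply mul_le_mul_of_nonneg_left hxK (inv_nonneg.2 ht.le)
        _ = ‖x‖ := by field_simp
        _ ≤ 1 := hx1
    nlinarith [norm_nonneg (Pl γ x + t⁻¹ • (x - Pl γ x)), norm_nonneg (Pl γ x),
      norm_nonneg (t⁻¹ • (x - Pl γ x))]
  · rw [Mt_apply]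
    have hP : Pl γ (Pl γ x + t⁻¹ • (x - Pl γ x)) = Pl γ x := by
      rw [map_add, _root_.map_smul, Pl_eq_self (Pl_mem γ x), Pl_eq_zero (sub_Pl_mem γ x)]
      simp
    rw [hP]
    rw [show Pl γ x + t⁻¹ • (x - Pl γ x) - Pl γ x = t⁻¹ • (x - Pl γ x) by abel]
    rw [smul_smul, mul_inv_cancel₀ ht.ne', one_smul]
    abel

set_option maxHeartbeats 1000000 in
/-- Lower bound for the cone volume. -/
lemma le_vK (γ : Submodule ℝ (E n)) {t : ℝ} (ht : 0 < t) (ht1 : t ≤ 1)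
    {p : E n} (hp : p ∈ γ) (hnp : ‖p‖ = 1 / 2) :
    ENNReal.ofReal (t ^ Module.finrank ℝ γᗮ) * volume (closedBall p (1 / 8 : ℝ)) ≤ vK γ t := by
  rw [← vol_Mt_image γ ht]
  refine measure_mono ?_
  rintro z ⟨y, hy, rfl⟩
  simp only [mem_closedBall, dist_eq_norm] at hy
  obtain ⟨a, ha⟩ : ∃ a, a = Pl γ y := ⟨_, rfl⟩
  obtain ⟨b, hb⟩ : ∃ b, b = y - Pl γ y := ⟨_, rfl⟩
  have hbmem : b ∈ γᗮ := hb ▸ sub_Pl_mem γ y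
  have htb : t • b ∈ γᗮ := Submodule.smul_mem _ _ hbmem
  have hamem : a ∈ γ := ha ▸ Pl_mem γ y
  have hMy : Mt γ t y = a + t • b := by rw [ha, hb]; rfl
  have hPb : ‖a - p‖ ≤ 1 / 8 := by
    have h9 : a - p = Pl γ (y - p) := by rw [ha, map_sub, Pl_eq_self hp]
    rw [h9]
    exact (norm_Pl_le γ (y - p)).trans hy
  have hQb : ‖b‖ ≤ 1 / 8 := by
    have h9 : b = (y - p) - Pl γ (y - p) := by rw [hb, map_sub, Pl_eq_self hp]; abel
    rw [h9]
    exact (norm_sub_Pl_le γ (y - p)).trans hy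
  have hna_lb : 3 / 8 ≤ ‖a‖ := by
    have := norm_sub_norm_le p a
    have h2 : ‖p - a‖ = ‖a - p‖ := norm_sub_rev _ _
    rw [hnp] at this; rw [h2] at this; linarith
  have hna_ub : ‖a‖ ≤ 5 / 8 := by
    have := norm_le_norm_add_norm_sub' a p
    have h3 : ‖a‖ ≤ ‖p‖ + ‖a - p‖ := by
      calc ‖a‖ = ‖p + (a - p)‖ := by rw [show p + (a - p) = a by abel]
        _ ≤ ‖p‖ + ‖a - p‖ := norm_add_le _ _
    rw [hnp] at h3; linarith
  have hsq := norm_sq_add hamem htb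
  have hntb : ‖t • b‖ ≤ t / 8 := by
    rw [norm_smul, Real.norm_eq_abs, abs_of_nonneg ht.le]
    nlinarith
  have hnMy_lb : 3 / 8 ≤ ‖a + t • b‖ := le_trans hna_lb (norm_left_le hamem htb)
  constructor
  · show ‖Mt γ t y - Pl γ (Mt γ t y)‖ ≤ t * ‖Mt γ t y‖
    have hPM : Pl γ (a + t • b) = a := by
      rw [map_add, _root_.map_smul, Pl_eq_self hamem, Pl_eq_zero hbmem]; simp
    rw [hMy, hPM, show a + t • b - a = t • b by abel]
    calc ‖t • b‖ ≤ t / 8 := hntb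
      _ ≤ t * (3 / 8) := by nlinarith
      _ ≤ t * ‖a + t • b‖ := by nlinarith
  · simp only [mem_closedBall, dist_zero_right]
    rw [hMy]
    have h1 : ‖a + t • b‖ ^ 2 ≤ (5/8)^2 + (1/8)^2 := by
      rw [hsq]
      have h5 : ‖t • b‖ ≤ 1/8 := le_trans hntb (by nlinarith)
      have h6 : ‖a‖ ^ 2 ≤ (5/8)^2 := by nlinarith [norm_nonneg a]
      have h7 : ‖t • b‖ ^ 2 ≤ (1/8)^2 := by nlinarith [norm_nonneg (t • b)]
      linarith
    exact (sq_le_one_iff₀ (norm_nonneg _)).1 (le_trans h1 (by norm_num))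

lemma mem_Kc_smul {γ : Submodule ℝ (E n)} {t c : ℝ} (hc : 0 < c) {x : E n} :
    c • x ∈ Kc γ t ↔ x ∈ Kc γ t := by
  simp only [Kc, mem_setOf_eq]
  rw [show c • x - Pl γ (c • x) = c • (x - Pl γ x) by rw [_root_.map_smul]; module]
  rw [norm_smul, norm_smul, Real.norm_eq_abs, abs_of_nonneg hc.le]
  rw [mul_left_comm]
  exact mul_le_mul_iff_right₀ hc

/-- Scaling of cone volumes. -/
lemma vol_Kc_closedBall (γ : Submodule ℝ (E n)) (t : ℝ) (hn : 0 < n) {R : ℝ} (hR : 0 ≤ R) :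
    volume (Kc γ t ∩ closedBall 0 R) = ENNReal.ofReal (R ^ n) * vK γ t := by
  rcases eq_or_lt_of_le hR with h | hRpos
  · subst h
    rw [closedBall_zero]
    haveI : Nontrivial (E n) :=
      Module.nontrivial_of_finrank_pos (R := ℝ) (by rw [finrank_euclideanSpace_fin]; exact hn)
    have : volume (Kc γ t ∩ {(0 : E n)}) = 0 :=
      le_antisymm (le_trans (measure_mono inter_subset_right) (by simp)) zero_le
    rw [this, zero_pow hn.ne', ENNReal.ofReal_zero, zero_mul]
  · have hset : Kc γ t ∩ closedBall 0 R = R • (Kc γ t ∩ closedBall (0 : E n) 1) := by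
      ext x
      rw [mem_smul_set_iff_inv_smul_mem₀ hRpos.ne']
      simp only [mem_inter_iff, mem_closedBall, dist_zero_right]
      constructor
      · rintro ⟨h1, h2⟩
        refine ⟨(mem_Kc_smul (inv_pos.2 hRpos)).2 h1, ?_⟩
        rw [norm_smul, Real.norm_eq_abs, abs_of_nonneg (inv_nonneg.2 hRpos.le)]
        rw [inv_mul_le_iff₀ hRpos, mul_one]; exact h2
      · rintro ⟨h1, h2⟩
        have := (mem_Kc_smul (inv_pos.2 hRpos)).1 h1
        refine ⟨this, ?_⟩
        rw [norm_smul, Real.norm_eq_abs, abs_of_nonneg (inv_nonneg.2 hRpos.le)] at h2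
        rw [inv_mul_le_iff₀ hRpos, mul_one] at h2; exact h2
    rw [hset, Measure.addHaar_smul_of_nonneg volume hRpos.le, finrank_euclideanSpace_fin]
    rfl

/-- Volume of the cone in an annulus. -/
lemma vol_Kc_annulus (γ : Submodule ℝ (E n)) (t : ℝ) (hn : 0 < n) {r R : ℝ}
    (h0 : 0 ≤ r) (hrR : r ≤ R) :
    volume (Kc γ t ∩ (closedBall 0 R \ closedBall 0 r)) =
      ENNReal.ofReal (R ^ n - r ^ n) * vK γ t := by
  have hR : (0:ℝ) ≤ R := le_trans h0 hrR
  have hsub : Kc γ t ∩ closedBall 0 r ⊆ Kc γ t ∩ closedBall (0 : E n) R :=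
    inter_subset_inter_right _ (closedBall_subset_closedBall hrR)
  have hseteq : Kc γ t ∩ (closedBall 0 R \ closedBall 0 r)
      = (Kc γ t ∩ closedBall 0 R) \ (Kc γ t ∩ closedBall (0:E n) r) := by
    ext x; simp only [mem_inter_iff, mem_diff, mem_inter_iff]; tauto
  rw [hseteq, measure_diff hsub
      (((measurableSet_Kc γ t).inter measurableSet_closedBall).nullMeasurableSet)
      (lt_of_le_of_lt (measure_mono inter_subset_right) measure_closedBall_lt_top).ne,
    vol_Kc_closedBall γ t hn hR, vol_Kc_closedBall γ t hn h0,
    ENNReal.ofReal_sub _ (pow_nonneg h0 n),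
    ENNReal.sub_mul (fun _ _ => vK_ne_top γ t)]


lemma pow_sub_pow_le {x y : ℝ} (N : ℕ) (h0 : 0 ≤ y) (hxy : y ≤ x) (hx : x ≤ 1) :
    x ^ N - y ^ N ≤ N * (x - y) := by
  induction N with
  | zero => simp
  | succ m ih =>
    have hy1 : y ≤ 1 := hxy.trans hx
    have hxm : x ^ m ≤ 1 := pow_le_one₀ (h0.trans hxy) hx
    have hym : y ^ m ≤ x ^ m := pow_le_pow_left₀ h0 hxy m
    have key : x^(m+1) - y^(m+1) = (x-y)*x^m + y*(x^m - y^m) := by ring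
    have h1 : (x-y)*x^m ≤ (x-y)*1 := mul_le_mul_of_nonneg_left hxm (sub_nonneg.2 hxy)
    have h2 : y*(x^m - y^m) ≤ 1*(m*(x-y)) :=
      mul_le_mul hy1 ih (sub_nonneg.2 hym) zero_le_one
    rw [key]
    push_cast
    linarith

lemma le_pow_sub_pow {x y : ℝ} (m : ℕ) (h0 : 0 ≤ y) (hxy : y ≤ x) :
    (x - y) * y ^ m ≤ x ^ (m+1) - y ^ (m+1) := by
  have h1 : y ^ m ≤ x ^ m := pow_le_pow_left₀ h0 hxy m
  have key : x^(m+1) - y^(m+1) = (x-y)*x^m + y*(x^m - y^m) := by ring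
  nlinarith [mul_nonneg (sub_nonneg.2 hxy) (sub_nonneg.2 h1), mul_nonneg h0 (sub_nonneg.2 h1)]

/-- The dyadic sequence `1 - 2⁻ʲ`. -/
def sf (j : ℕ) : ℝ := 1 - (2⁻¹ : ℝ)^j

lemma sf_zero : sf 0 = 0 := by simp [sf]

lemma sf_nonneg (j : ℕ) : 0 ≤ sf j := by
  have : (2⁻¹:ℝ)^j ≤ 1 := pow_le_one₀ (by norm_num) (by norm_num)
  simp only [sf]; linarith

lemma sf_lt_one (j : ℕ) : sf j < 1 := by
  have : (0:ℝ) < (2⁻¹:ℝ)^j := pow_pos (by norm_num) j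
  simp only [sf]; linarith

lemma sf_succ_sub (j : ℕ) : sf (j+1) - sf j = (2⁻¹:ℝ)^(j+1) := by
  simp only [sf, pow_succ]; ring

lemma sf_mono : Monotone sf := by
  intro i j hij
  simp only [sf, sub_le_sub_iff_left]
  exact pow_le_pow_of_le_one (by norm_num) (by norm_num) hij

lemma sf_half_le (j : ℕ) : (2⁻¹:ℝ) ≤ sf (j+1) := by
  have : (2⁻¹:ℝ)^(j+1) ≤ (2⁻¹:ℝ)^1 := pow_le_pow_of_le_one (by norm_num) (by norm_num) (by omega)
  simp only [sf]; simp at this ⊢; linarith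

lemma gap_ineq (m' j : ℕ) :
    (sf (j+1))^(m'+1) - (sf j)^(m'+1) ≤
      ((m'+1 : ℝ) * 2^(m'+1)) * ((sf (j+2))^(m'+1) - (sf (j+1))^(m'+1)) := by
  have hup : (sf (j+1))^(m'+1) - (sf j)^(m'+1) ≤ (m'+1 : ℝ) * (2⁻¹:ℝ)^(j+1) := by
    have h := pow_sub_pow_le (m'+1) (sf_nonneg j) (sf_mono (Nat.le_succ j)) (sf_lt_one (j+1)).le
    rw [sf_succ_sub j] at h
    push_cast at h ⊢
    exact h
  have hlow : (2⁻¹:ℝ)^(j+2) * (2⁻¹:ℝ)^(m') ≤ (sf (j+2))^(m'+1) - (sf (j+1))^(m'+1) := by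
    have h1 := le_pow_sub_pow m' (sf_nonneg (j+1)) (sf_mono (Nat.le_succ (j+1)))
    have h2 : (2⁻¹:ℝ)^(m') ≤ (sf (j+1))^(m') := pow_le_pow_left₀ (by norm_num) (sf_half_le j) m'
    calc (2⁻¹:ℝ)^(j+2) * (2⁻¹:ℝ)^(m')
        ≤ (2⁻¹:ℝ)^(j+2) * (sf (j+1))^(m') := by
          apply mul_le_mul_of_nonneg_left h2 (by positivity)
      _ = (sf (j+2) - sf (j+1)) * (sf (j+1))^(m') := by rw [sf_succ_sub (j+1)]
      _ ≤ _ := h1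
  have harith : ((m'+1 : ℝ) * 2^(m'+1)) * ((2⁻¹:ℝ)^(j+2) * (2⁻¹:ℝ)^(m'))
      = (m'+1 : ℝ) * (2⁻¹:ℝ)^(j+1) := by
    rw [show ((2:ℝ)⁻¹)^(j+2) = (2⁻¹:ℝ)^(j+1) * 2⁻¹ by rw [pow_succ]]
    rw [show ((2:ℝ))^(m'+1) = 2^(m') * 2 by rw [pow_succ]]
    have : ((2:ℝ))^(m') * ((2⁻¹:ℝ))^(m') = 1 := by
      rw [← mul_pow]; norm_num
    field_simp
    nlinarith [this]
  calc (sf (j+1))^(m'+1) - (sf j)^(m'+1) ≤ (m'+1 : ℝ) * (2⁻¹:ℝ)^(j+1) := hup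
    _ = ((m'+1 : ℝ) * 2^(m'+1)) * ((2⁻¹:ℝ)^(j+2) * (2⁻¹:ℝ)^(m')) := harith.symm
    _ ≤ _ := by
        apply mul_le_mul_of_nonneg_left hlow (by positivity)

end St17


/-- Lemma 6.2: for linear subspaces `α`, `β` with `dim α < dim β`, the volume of
`ST_θ(α)` in small balls is negligible compared with that of `ST_θ(β)`. -/

theorem stmt17 (S : OMinStructure) (n : ℕ) (α β : Submodule ℝ (E n))
    (hdim : Module.finrank ℝ α < Module.finrank ℝ β)
    (θ : ℝ → ℝ) (hθ : IsPhi S θ) :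
    Tendsto (fun ε : ℝ =>
        volume (STN θ (α : Set (E n)) ∩ closedBall (0 : E n) ε) /
        volume (STN θ (β : Set (E n)) ∩ closedBall (0 : E n) ε))
      (𝓝[>] (0 : ℝ)) (𝓝 0) := by
  classical
  obtain ⟨hθ0, hodd, ⟨δ, hδpos, hsm, hcont⟩, hdef⟩ := hθ
  have hmem : ∀ {x : ℝ}, 0 ≤ x → x < δ → x ∈ Ioo (-δ) δ := fun hx hxδ => ⟨by linarith, hxδ⟩
  have hmono : ∀ {x y : ℝ}, 0 ≤ x → x ≤ y → y < δ → θ x ≤ θ y := by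
    intro x y hx hxy hy
    exact hsm.monotoneOn (hmem hx (lt_of_le_of_lt hxy hy)) (hmem (hx.trans hxy) hy) hxy
  have hpos : ∀ {x : ℝ}, 0 < x → x < δ → 0 < θ x := by
    intro x hx hxδ
    have := hsm (hmem le_rfl hδpos) (hmem hx.le hxδ) hx
    rwa [hθ0] at this
  have hc0 : ContinuousAt θ 0 := hcont.continuousAt (Ioo_mem_nhds (by linarith) hδpos)
  have hθt : Tendsto θ (𝓝 0) (𝓝 0) := by
    have := hc0.tendsto; rwa [hθ0] at this
  obtain ⟨η, hηpos, hη1⟩ : ∃ η > 0, ∀ x : ℝ, |x| < η → θ x < 1 := by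
    have h1 : ∀ᶠ x in 𝓝 (0:ℝ), θ x < 1 := hθt.eventually (eventually_lt_nhds zero_lt_one)
    obtain ⟨η, hη, hb⟩ := Metric.eventually_nhds_iff.1 h1
    exact ⟨η, hη, fun x hx => hb (by simpa [Real.dist_eq] using hx)⟩
  -- dimensions
  set a := Module.finrank ℝ α with hadef
  set b := Module.finrank ℝ β with hbdef
  set ea := Module.finrank ℝ αᗮ with headef
  set eb := Module.finrank ℝ βᗮ with hebdef
  have hna : a + ea = n := by
    rw [hadef, headef, Submodule.finrank_add_finrank_orthogonal, finrank_euclideanSpace_fin]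
  have hnb : b + eb = n := by
    rw [hbdef, hebdef, Submodule.finrank_add_finrank_orthogonal, finrank_euclideanSpace_fin]
  set m := b - a with hmdef
  have hm1 : 1 ≤ m := by omega
  have heab : ea = m + eb := by omega
  have hnpos : 0 < n := by omega
  obtain ⟨n', rfl⟩ : ∃ n', n = n' + 1 := ⟨n - 1, by omega⟩
  -- a point of norm 1/2 in β
  have hβbot : β ≠ ⊥ := by
    intro h
    rw [h, finrank_bot] at hbdef
    omega
  obtain ⟨v, hvβ, hv0⟩ := Submodule.exists_mem_ne_zero_of_ne_bot hβbot
  set p₀ : E (n' + 1) := ((1:ℝ)/2) • (‖v‖⁻¹ • v) with hp₀def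
  have hp₀β : p₀ ∈ β := Submodule.smul_mem _ _ (Submodule.smul_mem _ _ hvβ)
  have hnp₀ : ‖p₀‖ = 1/2 := by
    rw [hp₀def, norm_smul, norm_smul, norm_inv, norm_norm, Real.norm_eq_abs]
    rw [inv_mul_cancel₀ (norm_ne_zero_iff.2 hv0)]
    norm_num
  -- constants
  set C₂ : ℝ≥0∞ := volume (closedBall (0 : E (n' + 1)) 2) with hC₂def
  set C₁ : ℝ≥0∞ := volume (closedBall p₀ (1/8 : ℝ)) with hC₁def
  have hC₁0 : C₁ ≠ 0 := (measure_closedBall_pos volume p₀ (by norm_num)).ne'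
  have hC₁top : C₁ ≠ ∞ := measure_closedBall_lt_top.ne
  have hC₂top : C₂ ≠ ∞ := measure_closedBall_lt_top.ne
  set Cn : ℝ≥0∞ := ENNReal.ofReal (((n' + 1 : ℕ) : ℝ) * 2 ^ (n' + 1)) with hCndef
  set CC : ℝ≥0∞ := Cn * (C₂ * C₁⁻¹) with hCCdef
  have hCCtop : CC ≠ ∞ :=
    ENNReal.mul_ne_top ENNReal.ofReal_ne_top
      (ENNReal.mul_ne_top hC₂top (ENNReal.inv_ne_top.2 hC₁0))
  -- pointwise cone-volume comparison
  have hcomp : ∀ t : ℝ, 0 < t → t ≤ 1 →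
      St17.vK α t ≤ ENNReal.ofReal (t ^ m) * (C₂ * C₁⁻¹) * St17.vK β t := by
    intro t ht ht1
    have hu := St17.vK_le α ht
    have hl := St17.le_vK β ht ht1 hp₀β hnp₀
    have hstep : ENNReal.ofReal (t ^ eb) ≤ C₁⁻¹ * St17.vK β t := by
      have h2 := mul_le_mul_left hl C₁⁻¹
      rwa [mul_assoc, ENNReal.mul_inv_cancel hC₁0 hC₁top, mul_one, mul_comm (St17.vK β t)]
        at h2
    calc St17.vK α t ≤ ENNReal.ofReal (t ^ ea) * C₂ := hu
      _ = ENNReal.ofReal (t ^ m) * ENNReal.ofReal (t ^ eb) * C₂ := by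
          rw [← ENNReal.ofReal_mul (pow_nonneg ht.le m), ← pow_add, ← heab]
      _ ≤ ENNReal.ofReal (t ^ m) * (C₁⁻¹ * St17.vK β t) * C₂ := by
          exact mul_le_mul_left (mul_le_mul_right hstep _) _
      _ = ENNReal.ofReal (t ^ m) * (C₂ * C₁⁻¹) * St17.vK β t := by ring
  -- key estimate for small ε
  have hkey : ∀ ε : ℝ, 0 < ε → ε < η → ε < δ →
      volume (STN θ (α : Set (E (n' + 1))) ∩ closedBall 0 ε) ≤
        (CC * ENNReal.ofReal (θ ε ^ m)) *
          volume (STN θ (β : Set (E (n' + 1))) ∩ closedBall 0 ε) := by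
    intro ε hε hεη hεδ
    have hθεpos : 0 < θ ε := hpos hε hεδ
    have hθε1 : θ ε < 1 := hη1 ε (by rwa [abs_of_pos hε])
    set r : ℕ → ℝ := fun j => ε * St17.sf j with hrdef
    have hr0 : r 0 = 0 := by simp [hrdef, St17.sf_zero]
    have hrnn : ∀ j, 0 ≤ r j := fun j => mul_nonneg hε.le (St17.sf_nonneg j)
    have hrlt : ∀ j, r j < ε := fun j => by
      have := St17.sf_lt_one j
      calc r j = ε * St17.sf j := rfl
        _ < ε * 1 := by exact mul_lt_mul_of_pos_left this hε
        _ = ε := mul_one ε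
    have hrmono : Monotone r := fun i j hij =>
      mul_le_mul_of_nonneg_left (St17.sf_mono hij) hε.le
    have hrpos : ∀ j, 0 < r (j+1) := fun j =>
      mul_pos hε (lt_of_lt_of_le (by norm_num) (St17.sf_half_le j))
    have hrδ : ∀ j, r j < δ := fun j => (hrlt j).trans hεδ
    have htj_pos : ∀ j, 0 < θ (r (j+1)) := fun j => hpos (hrpos j) (hrδ (j+1))
    have htj_le : ∀ j, θ (r (j+1)) ≤ θ ε := fun j => hmono (hrnn (j+1)) (hrlt (j+1)).le hεδ
    have htj_le1 : ∀ j, θ (r (j+1)) ≤ 1 := fun j => (htj_le j).trans hθε1.le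
    -- gap inequality for r
    have hgap : ∀ j, r (j+1) ^ (n'+1) - r j ^ (n'+1) ≤
        (((n' + 1 : ℕ) : ℝ) * 2 ^ (n'+1)) * (r (j+2) ^ (n'+1) - r (j+1) ^ (n'+1)) := by
      intro j
      have h := St17.gap_ineq n' j
      have hε' : 0 ≤ ε ^ (n'+1) := pow_nonneg hε.le _
      calc r (j+1) ^ (n'+1) - r j ^ (n'+1)
          = ε ^ (n'+1) * (St17.sf (j+1) ^ (n'+1) - St17.sf j ^ (n'+1)) := by
            simp only [hrdef, mul_pow]; ring
        _ ≤ ε ^ (n'+1) * ((((n' + 1 : ℕ) : ℝ) * 2 ^ (n'+1)) *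
              (St17.sf (j+2) ^ (n'+1) - St17.sf (j+1) ^ (n'+1))) := by
            apply mul_le_mul_of_nonneg_left _ hε'
            push_cast at h ⊢
            exact h
        _ = (((n' + 1 : ℕ) : ℝ) * 2 ^ (n'+1)) * (r (j+2) ^ (n'+1) - r (j+1) ^ (n'+1)) := by
            simp only [hrdef, mul_pow]; ring
    -- numerator covering
    set NA : ℕ → Set (E (n' + 1)) := fun j =>
      St17.Kc α (θ (r (j+1))) ∩ (closedBall 0 (r (j+1)) \ closedBall 0 (r j)) with hNAdef
    set DA : ℕ → Set (E (n' + 1)) := fun j =>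
      St17.Kc β (θ (r j)) ∩ (closedBall 0 (r (j+1)) \ closedBall 0 (r j)) with hDAdef
    have hNsub : STN θ (α : Set (E (n' + 1))) ∩ closedBall 0 ε ⊆
        (⋃ j, NA j) ∪ (sphere (0 : E (n' + 1)) ε ∪ closedBall (0 : E (n' + 1)) 0) := by
      rintro x ⟨hxS, hxB⟩
      simp only [mem_closedBall, dist_zero_right] at hxB
      rcases eq_or_lt_of_le (norm_nonneg x) with hx0 | hx0
      · have hx0' : x = 0 := norm_eq_zero.1 hx0.symm
        exact Or.inr (Or.inr (by simp [hx0', mem_closedBall]))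
      rcases eq_or_lt_of_le hxB with hxε | hxε
      · exact Or.inr (Or.inl (by simp [mem_sphere, dist_zero_right, hxε]))
      left
      -- find the annulus containing x
      have hex : ∃ k, ‖x‖ ≤ r k := by
        obtain ⟨k, hk⟩ := exists_pow_lt_of_lt_one
          (x := 1 - ‖x‖ / ε) (by rw [sub_pos, div_lt_one hε]; exact hxε)
          (by norm_num : (2⁻¹ : ℝ) < 1)
        refine ⟨k, ?_⟩
        have h7 : ‖x‖ / ε < St17.sf k := by
          simp only [St17.sf]; linarith
        have h8 := (div_lt_iff₀ hε).1 h7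
        show ‖x‖ ≤ ε * St17.sf k
        nlinarith
      have hk₀spec := Nat.find_spec hex
      have hk₀ne : Nat.find hex ≠ 0 := by
        intro h
        rw [h, hr0] at hk₀spec
        exact absurd hk₀spec (not_le.2 hx0)
      obtain ⟨j, hj⟩ : ∃ j, Nat.find hex = j + 1 := ⟨Nat.find hex - 1, by omega⟩
      rw [hj] at hk₀spec
      have hjlt : ¬ (‖x‖ ≤ r j) := Nat.find_min hex (by omega)
      refine mem_iUnion.2 ⟨j, ?_, ?_⟩
      · -- x is in the cone
        show ‖x - St17.Pl α x‖ ≤ θ (r (j+1)) * ‖x‖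
        have h1 : Metric.infDist x (α : Set (E (n' + 1))) ≤ θ ‖x‖ * ‖x‖ := hxS
        rw [St17.infDist_eq] at h1
        refine h1.trans (mul_le_mul_of_nonneg_right ?_ (norm_nonneg x))
        exact hmono (norm_nonneg x) hk₀spec (hrδ (j+1))
      · exact ⟨by simpa [mem_closedBall, dist_zero_right] using hk₀spec,
          by simpa [mem_closedBall, dist_zero_right] using hjlt⟩
    -- denominator: disjoint annular pieces inside the sea-tangle
    have hDsub : ∀ j, DA j ⊆ STN θ (β : Set (E (n' + 1))) ∩ closedBall 0 ε := by
      rintro j x ⟨hxK, hx1, hx2⟩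
      simp only [mem_closedBall, dist_zero_right, not_le] at hx1 hx2
      have hxδ' : ‖x‖ < δ := lt_trans (lt_of_le_of_lt hx1 (hrlt (j+1))) hεδ
      constructor
      · show Metric.infDist x (β : Set (E (n' + 1))) ≤ θ ‖x‖ * ‖x‖
        rw [St17.infDist_eq]
        refine le_trans hxK (mul_le_mul_of_nonneg_right ?_ (norm_nonneg x))
        exact hmono (hrnn j) hx2.le hxδ'
      · simp only [mem_closedBall, dist_zero_right]
        exact hx1.trans (hrlt (j+1)).le
    have hDdisj : Pairwise (Function.onFun Disjoint DA) := by
      have key : ∀ {i j : ℕ}, i < j → Disjoint (DA i) (DA j) := by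
        intro i j hij
        rw [Set.disjoint_left]
        rintro x ⟨-, hx1, -⟩ ⟨-, -, hx2⟩
        simp only [mem_closedBall, dist_zero_right, not_le] at hx1 hx2
        have : r (i+1) ≤ r j := hrmono (by omega)
        linarith
      intro i j hij
      rcases lt_or_gt_of_ne hij with h | h
      · exact key h
      · exact (key h).symm
    have hDmeas : ∀ j, MeasurableSet (DA j) := fun j =>
      (St17.measurableSet_Kc β _).inter
        (measurableSet_closedBall.diff measurableSet_closedBall)
    -- volume computations
    have hNvol : ∀ j, volume (NA j) =
        ENNReal.ofReal (r (j+1) ^ (n'+1) - r j ^ (n'+1)) * St17.vK α (θ (r (j+1))) := fun j =>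
      St17.vol_Kc_annulus α _ hnpos (hrnn j) (hrmono (Nat.le_succ j))
    have hDvol : ∀ j, volume (DA j) =
        ENNReal.ofReal (r (j+1) ^ (n'+1) - r j ^ (n'+1)) * St17.vK β (θ (r j)) := fun j =>
      St17.vol_Kc_annulus β _ hnpos (hrnn j) (hrmono (Nat.le_succ j))
    -- put the chain together
    have hsum : volume (STN θ (α : Set (E (n' + 1))) ∩ closedBall 0 ε) ≤
        ∑' j, volume (NA j) := by
      refine le_trans (measure_mono hNsub) ?_
      refine le_trans (measure_union_le _ _) ?_
      have hz : volume (sphere (0 : E (n' + 1)) ε ∪ closedBall (0 : E (n' + 1)) 0) = 0 := by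
        haveI : Nontrivial (E (n' + 1)) :=
          Module.nontrivial_of_finrank_pos (R := ℝ)
            (by rw [finrank_euclideanSpace_fin]; omega)
        refine le_antisymm (le_trans (measure_union_le _ _) ?_) zero_le
        rw [Measure.addHaar_sphere]
        rw [closedBall_zero]
        simp
      rw [hz, add_zero]
      exact measure_iUnion_le _
    have hterm : ∀ j, volume (NA j) ≤
        (CC * ENNReal.ofReal (θ ε ^ m)) * volume (DA (j+1)) := by
      intro j
      rw [hNvol j, hDvol (j+1)]
      have h1 : ENNReal.ofReal (r (j+1) ^ (n'+1) - r j ^ (n'+1)) ≤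
          Cn * ENNReal.ofReal (r (j+2) ^ (n'+1) - r (j+1) ^ (n'+1)) := by
        rw [hCndef, ← ENNReal.ofReal_mul (by positivity)]
        exact ENNReal.ofReal_le_ofReal (hgap j)
      have h2 : St17.vK α (θ (r (j+1))) ≤
          ENNReal.ofReal (θ ε ^ m) * (C₂ * C₁⁻¹) * St17.vK β (θ (r (j+1))) := by
        refine le_trans (hcomp _ (htj_pos j) (htj_le1 j)) ?_
        refine mul_le_mul_left (mul_le_mul_left ?_ _) _
        exact ENNReal.ofReal_le_ofReal
          (pow_le_pow_left₀ (htj_pos j).le (htj_le j) m)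
      calc ENNReal.ofReal (r (j+1) ^ (n'+1) - r j ^ (n'+1)) * St17.vK α (θ (r (j+1)))
          ≤ (Cn * ENNReal.ofReal (r (j+2) ^ (n'+1) - r (j+1) ^ (n'+1))) *
            (ENNReal.ofReal (θ ε ^ m) * (C₂ * C₁⁻¹) * St17.vK β (θ (r (j+1)))) :=
            mul_le_mul' h1 h2
        _ = (CC * ENNReal.ofReal (θ ε ^ m)) *
            (ENNReal.ofReal (r (j+2) ^ (n'+1) - r (j+1) ^ (n'+1)) *
              St17.vK β (θ (r (j+1)))) := by
            rw [hCCdef]; ring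
    calc volume (STN θ (α : Set (E (n' + 1))) ∩ closedBall 0 ε)
        ≤ ∑' j, volume (NA j) := hsum
      _ ≤ ∑' j, (CC * ENNReal.ofReal (θ ε ^ m)) * volume (DA (j+1)) :=
          ENNReal.tsum_le_tsum hterm
      _ = (CC * ENNReal.ofReal (θ ε ^ m)) * ∑' j, volume (DA (j+1)) := by
          rw [ENNReal.tsum_mul_left]
      _ ≤ (CC * ENNReal.ofReal (θ ε ^ m)) * ∑' j, volume (DA j) := by
          refine mul_le_mul_right ?_ _
          exact ENNReal.tsum_comp_le_tsum_of_injective (add_left_injective 1) _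
      _ = (CC * ENNReal.ofReal (θ ε ^ m)) * volume (⋃ j, DA j) := by
          rw [measure_iUnion hDdisj hDmeas]
      _ ≤ (CC * ENNReal.ofReal (θ ε ^ m)) *
          volume (STN θ (β : Set (E (n' + 1))) ∩ closedBall 0 ε) := by
          refine mul_le_mul_right (measure_mono ?_) _
          exact iUnion_subset hDsub
  -- conclude by squeezing
  have hbound : Tendsto (fun ε : ℝ => CC * ENNReal.ofReal (θ ε ^ m)) (𝓝[>] (0:ℝ)) (𝓝 0) := by
    have h1 : Tendsto θ (𝓝[>] (0:ℝ)) (𝓝 0) := hθt.mono_left nhdsWithin_le_nhds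
    have h2 : Tendsto (fun ε : ℝ => θ ε ^ m) (𝓝[>] (0:ℝ)) (𝓝 0) := by
      have := h1.pow m
      rwa [zero_pow (by omega : m ≠ 0)] at this
    have h3 : Tendsto (fun ε : ℝ => ENNReal.ofReal (θ ε ^ m)) (𝓝[>] (0:ℝ)) (𝓝 0) := by
      have := (ENNReal.continuous_ofReal.tendsto 0).comp h2
      simpa [Function.comp_def] using this
    have := ENNReal.Tendsto.const_mul h3 (Or.inr hCCtop)
    simpa using this
  refine tendsto_of_tendsto_of_tendsto_of_le_of_le' tendsto_const_nhds hbound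
    (Eventually.of_forall fun ε => zero_le) ?_
  have hio : Ioo (0:ℝ) (min η δ) ∈ 𝓝[>] (0:ℝ) :=
    Ioo_mem_nhdsGT_of_mem ⟨le_refl 0, lt_min hηpos hδpos⟩
  filter_upwards [hio] with ε hε
  exact ENNReal.div_le_of_le_mul
    (hkey ε hε.1 (lt_of_lt_of_le hε.2 (min_le_left _ _))
      (lt_of_lt_of_le hε.2 (min_le_right _ _)))
end
end
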